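/- arXiv:2107.10486 — 2 statements merged into one kernel-verified Lean document; each statement's English description precedes it below -/
import Mathlib

section
/- Let X (over A) be a nondegenerate subcorrespondence of Y (over B) via (φ̇, ϕ), and regard B as a regular A–B correspondence via ϕ. If J_X·B ⊆ J_Y, then [B, U_B] is a morphism from X to Y in ECCor, where U_B = j^{-1} ∘ ξ : X ⊗_A B → B ⊗_B Y, ξ is the correspondence isomorphism X ⊗_A B → Y determined by x ⊗ b ↦ φ̇(x)b, and j : B ⊗_B Y → Y is the canonical isomorphism b ⊗ y ↦ b·y. Moreover, the condition J_X·B ⊆ J_Y holds automatically whenever Y is injective. -/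
/-!  Common framework: C*-correspondences, tensor products, representations,
Cuntz–Pimsner algebras, and the category `ECCor`, axiomatised as structures. -/

noncomputable section

universe u

/-- The closed linear span of a subset of a topological `ℂ`-module. -/
def clspan {V : Type*} [AddCommMonoid V] [Module ℂ V] [TopologicalSpace V] (s : Set V) : Set V :=
  closure ((Submodule.span ℂ s : Submodule ℂ V) : Set V)

/-- A (nondegenerate) C*-correspondence from `A` to `B`: a right Hilbert `B`-module `X`
equipped with a left action of `A` by adjointable operators, such that `A · X` is dense. -/
structure Corr (A : Type u) (B : Type u)
    [NonUnitalCStarAlgebra A] [NonUnitalCStarAlgebra B] : Type (u + 1) where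
  /-- the underlying module -/
  X : Type u
  [nacg : NormedAddCommGroup X]
  [nsp : NormedSpace ℂ X]
  [cs : CompleteSpace X]
  /-- the `B`-valued inner product `⟨·,·⟩_B` -/
  ip : X → X → B
  /-- the right action of `B` -/
  sm : X → B → X
  /-- the left action of `A` -/
  la : A → X → X
  sm_add : ∀ (x y : X) (b : B), sm (x + y) b = sm x b + sm y b
  sm_add' : ∀ (x : X) (b c : B), sm x (b + c) = sm x b + sm x c
  sm_mul : ∀ (x : X) (b c : B), sm (sm x b) c = sm x (b * c)
  sm_smul : ∀ (z : ℂ) (x : X) (b : B), sm (z • x) b = z • sm x b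
  sm_smul' : ∀ (z : ℂ) (x : X) (b : B), sm x (z • b) = z • sm x b
  sm_bound : ∀ (x : X) (b : B), ‖sm x b‖ ≤ ‖x‖ * ‖b‖
  ip_add : ∀ (x y z : X), ip x (y + z) = ip x y + ip x z
  ip_smul : ∀ (z : ℂ) (x y : X), ip x (z • y) = z • ip x y
  ip_star : ∀ (x y : X), star (ip x y) = ip y x
  ip_sm : ∀ (x y : X) (b : B), ip x (sm y b) = ip x y * b
  ip_pos : ∀ x : X, ∃ b : B, ip x x = star b * b
  ip_norm : ∀ x : X, ‖x‖ ^ 2 = ‖ip x x‖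
  ip_bound : ∀ x y : X, ‖ip x y‖ ≤ ‖x‖ * ‖y‖
  la_add : ∀ (a : A) (x y : X), la a (x + y) = la a x + la a y
  la_smul : ∀ (a : A) (z : ℂ) (x : X), la a (z • x) = z • la a x
  la_add' : ∀ (a b : A) (x : X), la (a + b) x = la a x + la b x
  la_mul : ∀ (a b : A) (x : X), la (a * b) x = la a (la b x)
  la_smul' : ∀ (z : ℂ) (a : A) (x : X), la (z • a) x = z • la a x
  la_adj : ∀ (a : A) (x y : X), ip (la a x) y = ip x (la (star a) y)
  la_bound : ∀ (a : A) (x : X), ‖la a x‖ ≤ ‖a‖ * ‖x‖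
  la_sm : ∀ (a : A) (x : X) (b : B), la a (sm x b) = sm (la a x) b
  /-- nondegeneracy: `A · X` is dense in `X` -/
  nondeg : clspan {y : X | ∃ (a : A) (x : X), y = la a x} = Set.univ

attribute [instance] Corr.nacg Corr.nsp Corr.cs

namespace Corr

variable {A B : Type u} [NonUnitalCStarAlgebra A] [NonUnitalCStarAlgebra B]

/-- The left action, as a continuous linear operator. -/
def lmul (E : Corr A B) (a : A) : E.X →L[ℂ] E.X :=
  LinearMap.mkContinuous
    { toFun := E.la a
      map_add' := E.la_add a
      map_smul' := fun z x => E.la_smul a z x }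
    ‖a‖ (E.la_bound a)

/-- The rank-one operator `θ_{x,y} : z ↦ x · ⟨y, z⟩_B`. -/
def rankOne (E : Corr A B) (x y : E.X) : E.X →L[ℂ] E.X :=
  LinearMap.mkContinuous
    { toFun := fun z => E.sm x (E.ip y z)
      map_add' := fun u v => by
        show E.sm x (E.ip y (u + v)) = E.sm x (E.ip y u) + E.sm x (E.ip y v)
        rw [E.ip_add, E.sm_add']
      map_smul' := fun c u => by
        show E.sm x (E.ip y (c • u)) = c • E.sm x (E.ip y u)
        rw [E.ip_smul, E.sm_smul'] }
    (‖x‖ * ‖y‖)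
    (fun z => by
      calc ‖E.sm x (E.ip y z)‖ ≤ ‖x‖ * ‖E.ip y z‖ := E.sm_bound _ _
        _ ≤ ‖x‖ * (‖y‖ * ‖z‖) :=
            mul_le_mul_of_nonneg_left (E.ip_bound y z) (norm_nonneg x)
        _ = ‖x‖ * ‖y‖ * ‖z‖ := (mul_assoc _ _ _).symm)

/-- The compact operators `K(X)`: the closed linear span of the rank-one operators. -/
def compacts (E : Corr A B) : Set (E.X →L[ℂ] E.X) :=
  clspan (Set.range fun p : E.X × E.X => E.rankOne p.1 p.2)

/-- A correspondence is injective if its left action is injective. -/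
def Injective (E : Corr A B) : Prop := Function.Injective E.lmul

/-- A correspondence is regular if its left action is injective with values in the compacts. -/
def Regular (E : Corr A B) : Prop :=
  Function.Injective E.lmul ∧ ∀ a : A, E.lmul a ∈ E.compacts

/-- Katsura's ideal `J_X = φ_X⁻¹(K(X)) ∩ (ker φ_X)^⊥` of a correspondence over `A`. -/
def katsuraIdeal {A : Type u} [NonUnitalCStarAlgebra A] (E : Corr A A) : Set A :=
  {a : A | E.lmul a ∈ E.compacts ∧ ∀ b : A, E.lmul b = 0 → a * b = 0}

/-- The closed submodule `M · J` of `M` determined by a subset `J ⊆ B`. -/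
def smSet (M : Corr A B) (J : Set B) : Set M.X :=
  clspan {ξ : M.X | ∃ (m : M.X) (b : B), b ∈ J ∧ ξ = M.sm m b}

/-- A pair of operators on a correspondence which are adjoint to each other. -/
def IsAdjointPair (W : Corr A B) (T S : W.X →L[ℂ] W.X) : Prop :=
  ∀ ξ η : W.X, W.ip (T ξ) η = W.ip ξ (S η)

end Corr

/-- The condition `J_X · M ⊆ M · J_Y` on an `A–B` correspondence `M`,
relative to correspondences `X` over `A` and `Y` over `B`. -/
def KatsuraCompat {A B : Type u} [NonUnitalCStarAlgebra A] [NonUnitalCStarAlgebra B]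
    (E : Corr A A) (M : Corr A B) (F : Corr B B) : Prop :=
  ∀ a ∈ E.katsuraIdeal, ∀ m : M.X, M.la a m ∈ M.smSet F.katsuraIdeal

/-- An isomorphism of `A–B` correspondences. -/
structure CorrIso {A B : Type u} [NonUnitalCStarAlgebra A] [NonUnitalCStarAlgebra B]
    (E F : Corr A B) where
  toFun : E.X → F.X
  invFun : F.X → E.X
  left_inv : Function.LeftInverse invFun toFun
  right_inv : Function.RightInverse invFun toFun
  map_add : ∀ x y : E.X, toFun (x + y) = toFun x + toFun y
  map_smul : ∀ (c : ℂ) (x : E.X), toFun (c • x) = c • toFun x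
  map_la : ∀ (a : A) (x : E.X), toFun (E.la a x) = F.la a (toFun x)
  map_ip : ∀ x y : E.X, F.ip (toFun x) (toFun y) = E.ip x y

/-- Witness that the correspondence `T` *is* the balanced tensor product `E ⊗_B F`,
via the bilinear map `mk2 : (x, y) ↦ x ⊗ y`. -/
structure TensorData {A B C : Type u} [NonUnitalCStarAlgebra A] [NonUnitalCStarAlgebra B]
    [NonUnitalCStarAlgebra C] (E : Corr A B) (F : Corr B C) (T : Corr A C) where
  mk2 : E.X → F.X → T.X
  add_l : ∀ (x x' : E.X) (y : F.X), mk2 (x + x') y = mk2 x y + mk2 x' y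
  add_r : ∀ (x : E.X) (y y' : F.X), mk2 x (y + y') = mk2 x y + mk2 x y'
  smul_l : ∀ (c : ℂ) (x : E.X) (y : F.X), mk2 (c • x) y = c • mk2 x y
  smul_r : ∀ (c : ℂ) (x : E.X) (y : F.X), mk2 x (c • y) = c • mk2 x y
  balanced : ∀ (x : E.X) (b : B) (y : F.X), mk2 (E.sm x b) y = mk2 x (F.la b y)
  ip_mk : ∀ (x x' : E.X) (y y' : F.X),
    T.ip (mk2 x y) (mk2 x' y') = F.ip y (F.la (E.ip x x') y')
  la_mk : ∀ (a : A) (x : E.X) (y : F.X), T.la a (mk2 x y) = mk2 (E.la a x) y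
  sm_mk : ∀ (x : E.X) (y : F.X) (c : C), T.sm (mk2 x y) c = mk2 x (F.sm y c)
  dense : clspan (Set.range fun p : E.X × F.X => mk2 p.1 p.2) = Set.univ

/-- Witness that `C` is the `A–D` correspondence obtained from the C*-algebra `D`
by letting `A` act on the left through the map `ψ : A → D` (e.g. the identity
correspondence when `D = A` and `ψ = id`). -/
structure PullCorr {A D : Type u} [NonUnitalCStarAlgebra A] [NonUnitalCStarAlgebra D]
    (ψ : A → D) (C : Corr A D) where
  u : D → C.X
  bij : Function.Bijective u
  add : ∀ d d' : D, u (d + d') = u d + u d'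
  smul : ∀ (c : ℂ) (d : D), u (c • d) = c • u d
  ip : ∀ d d' : D, C.ip (u d) (u d') = star d * d'
  la : ∀ (a : A) (d : D), C.la a (u d) = u (ψ a * d)
  sm : ∀ d d' : D, C.sm (u d) d' = u (d * d')

/-- Witness that `W'` is the `C–D` correspondence obtained from the `B–D` correspondence `W`
by transferring the left action along a homomorphism `σ : C → L(W)`. -/
structure ReCorr {B C D : Type u} [NonUnitalCStarAlgebra B] [NonUnitalCStarAlgebra C]
    [NonUnitalCStarAlgebra D] (W : Corr B D) (σ : C → (W.X →L[ℂ] W.X)) (W' : Corr C D) where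
  w : W.X → W'.X
  bij : Function.Bijective w
  add : ∀ ξ η : W.X, w (ξ + η) = w ξ + w η
  smul : ∀ (c : ℂ) (ξ : W.X), w (c • ξ) = c • w ξ
  ip_eq : ∀ ξ η : W.X, W'.ip (w ξ) (w η) = W.ip ξ η
  sm_eq : ∀ (ξ : W.X) (d : D), w (W.sm ξ d) = W'.sm (w ξ) d
  la_eq : ∀ (c : C) (ξ : W.X), W'.la c (w ξ) = w (σ c ξ)

/-- The structure of an `A–B` imprimitivity bimodule on an `A–B` correspondence `M`:
a compatible left `A`-valued inner product, full on both sides. -/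
structure ImpData {A B : Type u} [NonUnitalCStarAlgebra A] [NonUnitalCStarAlgebra B]
    (M : Corr A B) where
  lip : M.X → M.X → A
  lip_add : ∀ x y z : M.X, lip (x + y) z = lip x z + lip y z
  lip_smul : ∀ (c : ℂ) (x y : M.X), lip (c • x) y = c • lip x y
  lip_star : ∀ x y : M.X, star (lip x y) = lip y x
  lip_la : ∀ (a : A) (x y : M.X), lip (M.la a x) y = a * lip x y
  lip_pos : ∀ x : M.X, ∃ a : A, lip x x = star a * a
  compat : ∀ x y z : M.X, M.la (lip x y) z = M.sm x (M.ip y z)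
  full_left : clspan {a : A | ∃ x y : M.X, a = lip x y} = Set.univ
  full_right : clspan {b : B | ∃ x y : M.X, b = M.ip x y} = Set.univ

/-- Witness that the `B–A` correspondence `N` is the dual (conjugate) imprimitivity bimodule
of the `A–B` imprimitivity bimodule `M`. -/
structure DualData {A B : Type u} [NonUnitalCStarAlgebra A] [NonUnitalCStarAlgebra B]
    (M : Corr A B) (imp : ImpData M) (N : Corr B A) where
  d : M.X → N.X
  bij : Function.Bijective d
  add : ∀ x y : M.X, d (x + y) = d x + d y
  conj_smul : ∀ (c : ℂ) (x : M.X), d (c • x) = (starRingEnd ℂ c) • d x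
  la_eq : ∀ (b : B) (x : M.X), N.la b (d x) = d (M.sm x (star b))
  sm_eq : ∀ (x : M.X) (a : A), N.sm (d x) a = d (M.la (star a) x)
  ip_eq : ∀ x y : M.X, N.ip (d x) (d y) = imp.lip x y

/-- Witness that `X` (a correspondence over `A`) is a nondegenerate subcorrespondence of
`Y` (a correspondence over `B`), via `(φ̇, ϕ)`. -/
structure SubCorr {A B : Type u} [NonUnitalCStarAlgebra A] [NonUnitalCStarAlgebra B]
    (E : Corr A A) (F : Corr B B) where
  φd : E.X → F.X
  φd_inj : Function.Injective φd
  φd_add : ∀ x y : E.X, φd (x + y) = φd x + φd y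
  φd_smul : ∀ (c : ℂ) (x : E.X), φd (c • x) = c • φd x
  ϕ : A → B
  ϕ_inj : Function.Injective ϕ
  ϕ_add : ∀ a b : A, ϕ (a + b) = ϕ a + ϕ b
  ϕ_mul : ∀ a b : A, ϕ (a * b) = ϕ a * ϕ b
  ϕ_star : ∀ a : A, ϕ (star a) = star (ϕ a)
  ϕ_smul : ∀ (c : ℂ) (a : A), ϕ (c • a) = c • ϕ a
  ϕ_nondeg : clspan {b : B | ∃ (a : A) (c : B), b = ϕ a * c} = Set.univ
  la_eq : ∀ (a : A) (x : E.X), φd (E.la a x) = F.la (ϕ a) (φd x)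
  ip_eq : ∀ x y : E.X, F.ip (φd x) (φd y) = ϕ (E.ip x y)
  dense : clspan {y : F.X | ∃ (x : E.X) (b : B), y = F.sm (φd x) b} = Set.univ

/-- A representation `(π, t)` of a correspondence `X` over `A` on a C*-algebra `D`. -/
structure CorrRep {A : Type u} [NonUnitalCStarAlgebra A] (E : Corr A A)
    (D : Type u) [NonUnitalCStarAlgebra D] where
  π : A → D
  t : E.X → D
  π_add : ∀ a b : A, π (a + b) = π a + π b
  π_mul : ∀ a b : A, π (a * b) = π a * π b
  π_star : ∀ a : A, π (star a) = star (π a)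
  π_smul : ∀ (c : ℂ) (a : A), π (c • a) = c • π a
  t_add : ∀ x y : E.X, t (x + y) = t x + t y
  t_smul : ∀ (c : ℂ) (x : E.X), t (c • x) = c • t x
  mul_t : ∀ (a : A) (x : E.X), π a * t x = t (E.la a x)
  t_mul : ∀ x y : E.X, star (t x) * t y = π (E.ip x y)

/-- Covariance of a representation on the Katsura ideal:
`π(a) = Ψ_t(φ_X(a))` for `a ∈ J_X`, expressed by simultaneous approximation of
`φ_X(a)` by finite-rank operators and of `π(a)` by the corresponding finite sums. -/
def CorrRep.Covariant {A : Type u} [NonUnitalCStarAlgebra A] {E : Corr A A}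
    {D : Type u} [NonUnitalCStarAlgebra D] (R : CorrRep E D) : Prop :=
  ∀ a ∈ E.katsuraIdeal, ∀ ε > (0 : ℝ), ∃ (k : ℕ) (x y : Fin k → E.X),
    ‖E.lmul a - ∑ i, E.rankOne (x i) (y i)‖ < ε ∧
    ‖R.π a - ∑ i, R.t (x i) * star (R.t (y i))‖ < ε

/-- The products `t(x₁)⋯t(xₙ)`, i.e. `t^n` applied to elementary tensors. -/
def CorrRep.tProd {A : Type u} [NonUnitalCStarAlgebra A] {E : Corr A A}
    {D : Type u} [NonUnitalCStarAlgebra D] (R : CorrRep E D) :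
    (n : ℕ) → (Fin (n + 1) → E.X) → D
  | 0, x => R.t (x 0)
  | (k + 1), x => R.t (x 0) * R.tProd k (fun i => x i.succ)

/-- A Cuntz–Pimsner algebra for `X`: a C*-algebra `O` with a universal injective covariant
representation of `X`, generated by the image of that representation. -/
structure CuntzPimsner {A : Type u} [NonUnitalCStarAlgebra A] (E : Corr A A) :
    Type (u + 1) where
  O : Type u
  [str : NonUnitalCStarAlgebra O]
  rep : CorrRep E O
  covariant : rep.Covariant
  injective : Function.Injective rep.π
  generates :
    Dense ((NonUnitalStarAlgebra.adjoin ℂ (Set.range rep.π ∪ Set.range rep.t) :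
      NonUnitalStarSubalgebra ℂ O) : Set O)
  universal : ∀ (D : Type u) [NonUnitalCStarAlgebra D] (R : CorrRep E D), R.Covariant →
    ∃ ρ : O → D, Continuous ρ ∧
      (∀ p q : O, ρ (p + q) = ρ p + ρ q) ∧
      (∀ (c : ℂ) (p : O), ρ (c • p) = c • ρ p) ∧
      (∀ p q : O, ρ (p * q) = ρ p * ρ q) ∧
      (∀ p : O, ρ (star p) = star (ρ p)) ∧
      (∀ a : A, ρ (rep.π a) = R.π a) ∧
      (∀ x : E.X, ρ (rep.t x) = R.t x)

attribute [instance] CuntzPimsner.str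

/-- The gauge action of the circle on a Cuntz–Pimsner algebra. -/
structure GaugeAction {A : Type u} [NonUnitalCStarAlgebra A] {E : Corr A A}
    (CP : CuntzPimsner E) where
  g : ℂ → CP.O → CP.O
  g_add : ∀ z : ℂ, ‖z‖ = 1 → ∀ S T : CP.O, g z (S + T) = g z S + g z T
  g_smul : ∀ z : ℂ, ‖z‖ = 1 → ∀ (c : ℂ) (S : CP.O), g z (c • S) = c • g z S
  g_mul : ∀ z : ℂ, ‖z‖ = 1 → ∀ S T : CP.O, g z (S * T) = g z S * g z T
  g_star : ∀ z : ℂ, ‖z‖ = 1 → ∀ S : CP.O, g z (star S) = star (g z S)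
  g_comp : ∀ z w : ℂ, ‖z‖ = 1 → ‖w‖ = 1 → ∀ S : CP.O, g (z * w) S = g z (g w S)
  g_one : ∀ S : CP.O, g 1 S = S
  g_cont : ∀ S : CP.O, Continuous fun z : {z : ℂ // ‖z‖ = 1} => g z.1 S
  g_π : ∀ z : ℂ, ‖z‖ = 1 → ∀ a : A, g z (CP.rep.π a) = CP.rep.π a
  g_t : ∀ z : ℂ, ‖z‖ = 1 → ∀ x : E.X, g z (CP.rep.t x) = z • CP.rep.t x

/-- The data of a morphism `X → Y` in the category `ECCor`: a regular `A–B` correspondence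
`M` with `J_X · M ⊆ M · J_Y`, together with a correspondence isomorphism
`U : X ⊗_A M → M ⊗_B Y`. -/
structure EMor {A B : Type u} [NonUnitalCStarAlgebra A] [NonUnitalCStarAlgebra B]
    (E : Corr A A) (F : Corr B B) : Type (u + 1) where
  M : Corr A B
  regular : M.Regular
  kat : KatsuraCompat E M F
  TXM : Corr A B
  tdXM : TensorData E M TXM
  TMY : Corr A B
  tdMY : TensorData M F TMY
  U : CorrIso TXM TMY

/-- Two morphism data `(M, U_M)` and `(M', U_{M'})` are isomorphic:
there is an isomorphism `ξ : M → M'` with `U_{M'} ∘ (1_X ⊗ ξ) = (ξ ⊗ 1_Y) ∘ U_M`. -/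
def EMorEquiv {A B : Type u} [NonUnitalCStarAlgebra A] [NonUnitalCStarAlgebra B]
    {E : Corr A A} {F : Corr B B} (m m' : EMor E F) : Prop :=
  ∃ ξ : CorrIso m.M m'.M,
  ∃ Ξ : m.TMY.X → m'.TMY.X,
    (∀ ζ η, Ξ (ζ + η) = Ξ ζ + Ξ η) ∧
    (∀ (c : ℂ) ζ, Ξ (c • ζ) = c • Ξ ζ) ∧
    Continuous Ξ ∧
    (∀ (mm : m.M.X) (y : F.X), Ξ (m.tdMY.mk2 mm y) = m'.tdMY.mk2 (ξ.toFun mm) y) ∧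
    (∀ (x : E.X) (mm : m.M.X),
      m'.U.toFun (m'.tdXM.mk2 x (ξ.toFun mm)) = Ξ (m.U.toFun (m.tdXM.mk2 x mm)))

/-- `p` is a composite of `m : X → Y` and `n : Y → Z` in `ECCor`:
`p.M = M ⊗_B N` and `U_P = (1_M ⊗ U_N)(U_M ⊗ 1_N)` modulo the canonical identifications. -/
def EIsComposite {A B C : Type u} [NonUnitalCStarAlgebra A] [NonUnitalCStarAlgebra B]
    [NonUnitalCStarAlgebra C] {E : Corr A A} {F : Corr B B} {G : Corr C C}
    (m : EMor E F) (n : EMor F G) (p : EMor E G) : Prop :=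
  ∃ td : TensorData m.M n.M p.M,
  ∃ Ξ : m.M.X → n.TMY.X → p.TMY.X,       -- m ⊗ (n ⊗ z) ↦ (m ⊗ n) ⊗ z
  ∃ Θ : m.TMY.X → n.M.X → p.TMY.X,       -- (m ⊗ y) ⊗ n ↦ m ⊗ U_N(y ⊗ n)
    (∀ mm : m.M.X, (∀ ζ η, Ξ mm (ζ + η) = Ξ mm ζ + Ξ mm η) ∧
      (∀ (c : ℂ) ζ, Ξ mm (c • ζ) = c • Ξ mm ζ) ∧ Continuous (Ξ mm)) ∧
    (∀ (mm : m.M.X) (nn : n.M.X) (z : G.X),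
      Ξ mm (n.tdMY.mk2 nn z) = p.tdMY.mk2 (td.mk2 mm nn) z) ∧
    (∀ nn : n.M.X, (∀ ζ η, Θ (ζ + η) nn = Θ ζ nn + Θ η nn) ∧
      (∀ (c : ℂ) ζ, Θ (c • ζ) nn = c • Θ ζ nn) ∧ Continuous (fun ζ => Θ ζ nn)) ∧
    (∀ (mm : m.M.X) (y : F.X) (nn : n.M.X),
      Θ (m.tdMY.mk2 mm y) nn = Ξ mm (n.U.toFun (n.tdXM.mk2 y nn))) ∧
    (∀ (x : E.X) (mm : m.M.X) (nn : n.M.X),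
      p.U.toFun (p.tdXM.mk2 x (td.mk2 mm nn)) = Θ (m.U.toFun (m.tdXM.mk2 x mm)) nn)

/-- `e` is an identity morphism on `X` in `ECCor`: `e.M` is the identity correspondence `A`
and `U_A = i_l⁻¹ ∘ i_r : X ⊗_A A → A ⊗_A X`, i.e. `i_l (U_A (x ⊗ a)) = x · a`. -/
def EIsIdentity {A : Type u} [NonUnitalCStarAlgebra A] {E : Corr A A}
    (e : EMor E E) : Prop :=
  ∃ idd : PullCorr (fun a : A => a) e.M,
  ∃ il : e.TMY.X → E.X,
    (∀ ζ η, il (ζ + η) = il ζ + il η) ∧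
    (∀ (c : ℂ) ζ, il (c • ζ) = c • il ζ) ∧
    Continuous il ∧
    Function.Injective il ∧
    (∀ (a : A) (x : E.X), il (e.tdMY.mk2 (idd.u a) x) = E.la a x) ∧
    (∀ (x : E.X) (a : A), il (e.U.toFun (e.tdXM.mk2 x (idd.u a))) = E.sm x a)

/-- A morphism in `ECCor` is an isomorphism: it has a two-sided inverse up to
isomorphism of morphism data. -/
def EIsEIso {A B : Type u} [NonUnitalCStarAlgebra A] [NonUnitalCStarAlgebra B]
    {E : Corr A A} {F : Corr B B} (m : EMor E F) : Prop :=
  ∃ (n : EMor F E) (p : EMor E E) (q : EMor F F) (e : EMor E E) (f : EMor F F),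
    EIsComposite m n p ∧ EIsIdentity e ∧ EMorEquiv p e ∧
    EIsComposite n m q ∧ EIsIdentity f ∧ EMorEquiv q f

/-- The standing data for the C-covariant representation of `X` on `K(M ⊗_B O_Y)`
associated with a morphism `[M, U_M] : X → Y` in `ECCor`:  `O_Y` regarded as a
`B–O_Y` correspondence, the tensor product `W = M ⊗_B O_Y`, the canonical map
`Λ : (M ⊗_B Y) × O_Y → W`, `(m ⊗ y, S) ↦ m ⊗ t_Y(y)S`, and the operators
`Φ(x) = (1_M ⊗ V_Y)(T(x) ⊗ 1_{O_Y})`. -/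
structure CCovSetup {A B : Type u} [NonUnitalCStarAlgebra A] [NonUnitalCStarAlgebra B]
    {E : Corr A A} {F : Corr B B} (m : EMor E F) (CPY : CuntzPimsner F) :
    Type (u + 1) where
  OYc : Corr B CPY.O
  pcY : PullCorr CPY.rep.π OYc
  W : Corr A CPY.O
  tdW : TensorData m.M OYc W
  Λ : m.TMY.X → CPY.O → W.X
  Λ_add : ∀ (S : CPY.O) (ζ η : m.TMY.X), Λ (ζ + η) S = Λ ζ S + Λ η S
  Λ_smul : ∀ (S : CPY.O) (c : ℂ) (ζ : m.TMY.X), Λ (c • ζ) S = c • Λ ζ S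
  Λ_cont : ∀ S : CPY.O, Continuous fun ζ => Λ ζ S
  Λ_mk : ∀ (mm : m.M.X) (y : F.X) (S : CPY.O),
    Λ (m.tdMY.mk2 mm y) S = tdW.mk2 mm (pcY.u (CPY.rep.t y * S))
  Φ : E.X → (W.X →L[ℂ] W.X)
  Φ_mk : ∀ (x : E.X) (mm : m.M.X) (S : CPY.O),
    Φ x (tdW.mk2 mm (pcY.u S)) = Λ (m.U.toFun (m.tdXM.mk2 x mm)) S

/-- The homomorphism `σ : O_X → K(M ⊗_B O_Y) ⊆ L(M ⊗_B O_Y)` induced by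
the C-covariant representation. -/
structure SigmaData {A B : Type u} [NonUnitalCStarAlgebra A] [NonUnitalCStarAlgebra B]
    {E : Corr A A} {F : Corr B B} {m : EMor E F} {CPY : CuntzPimsner F}
    (st : CCovSetup m CPY) (CPX : CuntzPimsner E) where
  σ : CPX.O → (st.W.X →L[ℂ] st.W.X)
  σ_add : ∀ S T : CPX.O, σ (S + T) = σ S + σ T
  σ_smul : ∀ (c : ℂ) (S : CPX.O), σ (c • S) = c • σ S
  σ_mul : ∀ S T : CPX.O, σ (S * T) = (σ S).comp (σ T)
  σ_star : ∀ S : CPX.O, st.W.IsAdjointPair (σ S) (σ (star S))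
  σ_cont : Continuous σ
  σ_t : ∀ x : E.X, σ (CPX.rep.t x) = st.Φ x
  σ_π : ∀ a : A, σ (CPX.rep.π a) = st.W.lmul a

/-- A bundled C*-correspondence over a C*-algebra. -/
structure BCorr : Type (u + 1) where
  alg : Type u
  [str : NonUnitalCStarAlgebra alg]
  cor : Corr alg alg

attribute [instance] BCorr.str

/-- Elementary strong shift equivalence through *regular* correspondences `R`, `S`:
`X ≅ R ⊗_B S` and `Y ≅ S ⊗_A R`. -/
def ElemSSERegular (E F : BCorr) : Prop :=
  ∃ (R : Corr E.alg F.alg) (S : Corr F.alg E.alg)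
    (T₁ : Corr E.alg E.alg) (_ : TensorData R S T₁)
    (T₂ : Corr F.alg F.alg) (_ : TensorData S R T₂),
    R.Regular ∧ S.Regular ∧ Nonempty (CorrIso T₁ E.cor) ∧ Nonempty (CorrIso T₂ F.cor)

/-- Strong shift equivalence (with all intermediate data regular). -/
def StrongSSERegular (E F : BCorr) : Prop :=
  ∃ (n : ℕ) (Z : Fin (n + 1) → BCorr),
    Z 0 = E ∧ Z (Fin.last n) = F ∧
    (∀ i, (Z i).cor.Regular) ∧
    ∀ i : Fin n, ElemSSERegular (Z i.castSucc) (Z i.succ)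

/-- The tower of tensor powers `X^{⊗ k}` of a correspondence `X` over `A`
(with `X^{⊗ 0} = A`), together with the "append on the right" maps
`X^{⊗ k} × X → X^{⊗ (k+1)}`. -/
structure PowerTower {A : Type u} [NonUnitalCStarAlgebra A] (E : Corr A A) :
    Type (u + 1) where
  P : ℕ → Corr A A
  zero : PullCorr (fun a : A => a) (P 0)
  step : ∀ k : ℕ, TensorData E (P k) (P (k + 1))
  app : ∀ k : ℕ, (P k).X → E.X → (P (k + 1)).X
  app_add : ∀ (k : ℕ) (y : E.X) (w w' : (P k).X), app k (w + w') y = app k w y + app k w' y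
  app_smul : ∀ (k : ℕ) (y : E.X) (c : ℂ) (w : (P k).X), app k (c • w) y = c • app k w y
  app_cont : ∀ (k : ℕ) (y : E.X), Continuous fun w => app k w y
  app_base : ∀ (a : A) (y : E.X) (b : A),
    (P 1).sm (app 0 (zero.u a) y) b = (step 0).mk2 (E.la a y) (zero.u b)
  app_step : ∀ (k : ℕ) (x : E.X) (w : (P k).X) (y : E.X),
    app (k + 1) ((step k).mk2 x w) y = (step (k + 1)).mk2 x (app k w y)

end

/-!
`B` is regular because left multiplication by `ϕ(a)` is the norm limit of the rank-one operators
`θ_{e, ϕ(a)⋆}` (left multiplication by `e ϕ(a)`) along an approximate unit `e` of `B`; the same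
approximation puts `ϕ(a) b ∈ J_Y` into `B · J_Y`. The assignments `x ⊗ b ↦ φ̇(x) b` and
`b ⊗ y ↦ b · y` preserve inner products of elementary tensors, so they extend to isometries
onto `Y` (onto, by nondegeneracy of the subcorrespondence and of `Y`), and `U_B` is the first
followed by the inverse of the second.

For injective `Y` only `φ_Y(ϕ(a)) ∈ K(Y)` needs proof. An operator `T` on `X` induces at most one
operator `S` on `Y` with `S(φ̇(x) b) = φ̇(T x) b`. A finite-rank `T` induces a finite-rank `S`
with `‖S‖ ≤ ‖T‖`, by a spectral-radius argument. Hence induction passes to norm limits, and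
`φ_X(a) ∈ K(X)` induces `φ_Y(ϕ(a))`, which is then compact.
-/

noncomputable section

universe u

open Filter Topology

lemma dense_of_clspan_eq_univ {V : Type*} [AddCommMonoid V] [Module ℂ V] [TopologicalSpace V]
    {s : Set V} (h : clspan s = Set.univ) : Dense (Submodule.span ℂ s : Set V) :=
  dense_iff_closure_eq.mpr h

namespace Corr

variable {A B C : Type u} [NonUnitalCStarAlgebra A] [NonUnitalCStarAlgebra B]
  [NonUnitalCStarAlgebra C] (M : Corr A B)

@[simp] lemma lmul_apply (a : A) (x : M.X) : M.lmul a x = M.la a x := rfl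

@[simp] lemma rankOne_apply (x y z : M.X) : M.rankOne x y z = M.sm x (M.ip y z) := rfl

def ipL (x : M.X) : M.X →L[ℂ] B :=
  LinearMap.mkContinuous
    { toFun := M.ip x
      map_add' := M.ip_add x
      map_smul' := fun c y => M.ip_smul c x y } ‖x‖ (M.ip_bound x)

@[simp] lemma ipL_apply (x y : M.X) : M.ipL x y = M.ip x y := rfl

def smL (b : B) : M.X →L[ℂ] M.X :=
  LinearMap.mkContinuous
    { toFun := fun x => M.sm x b
      map_add' := fun x y => M.sm_add x y b
      map_smul' := fun c x => M.sm_smul c x b } ‖b‖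
    (fun x => by rw [mul_comm]; exact M.sm_bound x b)

@[simp] lemma smL_apply (b : B) (x : M.X) : M.smL b x = M.sm x b := rfl

lemma sm_sub_left (x y : M.X) (b : B) : M.sm (x - y) b = M.sm x b - M.sm y b :=
  map_sub (M.smL b) x y

lemma ip_swap (x y : M.X) : M.ip x y = star (M.ip y x) := by rw [M.ip_star]

lemma ip_zero_right (x : M.X) : M.ip x 0 = 0 := map_zero (M.ipL x)

lemma ip_zero_left (x : M.X) : M.ip 0 x = 0 := by rw [ip_swap, ip_zero_right, star_zero]

lemma ip_add_left (x y z : M.X) : M.ip (x + y) z = M.ip x z + M.ip y z := by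
  rw [ip_swap, M.ip_add, star_add, ← ip_swap, ← ip_swap]

lemma ip_smul_left (c : ℂ) (x y : M.X) : M.ip (c • x) y = star c • M.ip x y := by
  rw [ip_swap, M.ip_smul, star_smul, ← ip_swap]

lemma ip_sub_right (x y z : M.X) : M.ip x (y - z) = M.ip x y - M.ip x z := map_sub (M.ipL x) y z

lemma ip_sub_left (x y z : M.X) : M.ip (x - y) z = M.ip x z - M.ip y z := by
  rw [ip_swap, ip_sub_right, star_sub, ← ip_swap, ← ip_swap]

lemma ip_sm_left (x : M.X) (b : B) (y : M.X) : M.ip (M.sm x b) y = star b * M.ip x y := by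
  rw [ip_swap, M.ip_sm, star_mul, ← ip_swap]

lemma ip_sum_right {ι : Type*} (s : Finset ι) (x : M.X) (f : ι → M.X) :
    M.ip x (∑ i ∈ s, f i) = ∑ i ∈ s, M.ip x (f i) :=
  map_sum (M.ipL x) f s

lemma ip_sum_left {ι : Type*} (s : Finset ι) (x : M.X) (f : ι → M.X) :
    M.ip (∑ i ∈ s, f i) x = ∑ i ∈ s, M.ip (f i) x := by
  simp only [ip_swap M _ x, ip_sum_right, star_sum]

lemma continuous_ip_right (x : M.X) : Continuous (M.ip x) := (M.ipL x).continuous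

lemma continuous_ip_left (y : M.X) : Continuous (fun x => M.ip x y) := by
  simp only [ip_swap M _ y]
  exact continuous_star.comp (M.continuous_ip_right y)

lemma norm_eq_norm_of_ip {N : Corr C B} {x : M.X} {y : N.X} (h : M.ip x x = N.ip y y) :
    ‖x‖ = ‖y‖ := by
  have h2 : ‖x‖ ^ 2 = ‖y‖ ^ 2 := by rw [M.ip_norm, N.ip_norm, h]
  exact (sq_eq_sq₀ (norm_nonneg _) (norm_nonneg _)).mp h2

lemma eq_zero_of_ip_self_eq_zero {x : M.X} (h : M.ip x x = 0) : x = 0 := by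
  have h2 : ‖x‖ ^ 2 = 0 := by rw [M.ip_norm, h, norm_zero]
  simpa using h2

variable {M} {N : Corr C B}

lemma ip_map_eq_of_dense (Φ : M.X →L[ℂ] N.X) {D : Set M.X} (hD : Dense D)
    (h : ∀ x ∈ D, ∀ y ∈ D, N.ip (Φ x) (Φ y) = M.ip x y) (x y : M.X) :
    N.ip (Φ x) (Φ y) = M.ip x y := by
  have hright : ∀ x ∈ D, ∀ y, N.ip (Φ x) (Φ y) = M.ip x y := fun x hx =>
    congrFun (Continuous.ext_on hD ((N.continuous_ip_right _).comp Φ.continuous)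
      (M.continuous_ip_right x) (h x hx))
  exact congrFun (Continuous.ext_on hD ((N.continuous_ip_left _).comp Φ.continuous)
    (M.continuous_ip_left y) fun x hx => hright x hx y) x

lemma ip_linearCombination {ι : Type*} (g : ι → M.X) (h : ι → N.X)
    (hip : ∀ i j, N.ip (h i) (h j) = M.ip (g i) (g j)) (s t : ι →₀ ℂ) :
    N.ip (Finsupp.linearCombination ℂ h s) (Finsupp.linearCombination ℂ h t) =
      M.ip (Finsupp.linearCombination ℂ g s) (Finsupp.linearCombination ℂ g t) := by
  induction s using Finsupp.induction_linear with
  | zero => simp only [map_zero, ip_zero_left]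
  | add s s' hs hs' => simp only [map_add, ip_add_left, hs, hs']
  | single i c =>
    simp only [Finsupp.linearCombination_single, ip_smul_left]
    congr 1
    induction t using Finsupp.induction_linear with
    | zero => simp only [map_zero, ip_zero_right]
    | add t t' ht ht' => simp only [map_add, ip_add, ht, ht']
    | single j d => simp only [Finsupp.linearCombination_single, ip_smul, hip]

theorem exists_extension {ι : Type*} (g : ι → M.X) (h : ι → N.X)
    (hip : ∀ i j, N.ip (h i) (h j) = M.ip (g i) (g j)) (hdense : clspan (Set.range g) = Set.univ) :
    ∃ Φ : M.X →L[ℂ] N.X, (∀ i, Φ (g i) = h i) ∧ ∀ x y, N.ip (Φ x) (Φ y) = M.ip x y := by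
  let l₁ := Finsupp.linearCombination ℂ g
  let l₂ := Finsupp.linearCombination ℂ h
  have hl : ∀ s t, N.ip (l₂ s) (l₂ t) = M.ip (l₁ s) (l₁ t) := ip_linearCombination g h hip
  have hker : LinearMap.ker l₁ ≤ LinearMap.ker l₂ := fun s hs => by
    rw [LinearMap.mem_ker] at hs ⊢
    exact N.eq_zero_of_ip_self_eq_zero (by rw [hl, hs, ip_zero_left])
  let V := LinearMap.range l₁
  let j : V →ₗ[ℂ] N.X :=
    (LinearMap.ker l₁).liftQ l₂ hker ∘ₗ l₁.quotKerEquivRange.symm.toLinearMap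
  have hj : ∀ s, j ⟨l₁ s, l₁.mem_range_self s⟩ = l₂ s := fun s => by
    change (LinearMap.ker l₁).liftQ l₂ hker (l₁.quotKerEquivRange.symm ⟨l₁ s, _⟩) = l₂ s
    rw [LinearMap.quotKerEquivRange_symm_apply_image, Submodule.mkQ_apply,
      Submodule.liftQ_apply]
  let Φ₀ : V →L[ℂ] N.X := j.mkContinuous 1 fun ζ => by
    obtain ⟨_, s, rfl⟩ := ζ
    rw [hj, one_mul, N.norm_eq_norm_of_ip (hl s s)]
    rfl
  have hV : Dense (V : Set M.X) := by
    simpa only [V, l₁, Finsupp.range_linearCombination] using dense_of_clspan_eq_univ hdense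
  have hΦ : ∀ s, Φ₀.extend V.subtypeL (l₁ s) = l₂ s := fun s =>
    (Φ₀.extend_eq (e := V.subtypeL) (by simpa [DenseRange] using hV)
      isometry_subtype_coe.isUniformInducing ⟨l₁ s, l₁.mem_range_self s⟩).trans (hj s)
  refine ⟨Φ₀.extend V.subtypeL, fun i => by simpa [l₁, l₂] using hΦ (Finsupp.single i 1), ?_⟩
  refine ip_map_eq_of_dense _ hV ?_
  rintro _ ⟨s, rfl⟩ _ ⟨t, rfl⟩
  rw [hΦ, hΦ, hl]

end Corr

namespace Corr

variable {A B : Type u} [NonUnitalCStarAlgebra A] [NonUnitalCStarAlgebra B] {W : Corr A B}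

namespace IsAdjointPair

variable {T S : W.X →L[ℂ] W.X}

lemma symm (h : W.IsAdjointPair T S) : W.IsAdjointPair S T := fun ξ η => by
  rw [ip_swap, ← h, ← ip_swap]

lemma comp {T' S' : W.X →L[ℂ] W.X} (h : W.IsAdjointPair T S) (h' : W.IsAdjointPair T' S') :
    W.IsAdjointPair (T ∘L T') (S' ∘L S) := fun ξ η => by
  rw [ContinuousLinearMap.comp_apply, ContinuousLinearMap.comp_apply, h, h']

lemma pow (h : W.IsAdjointPair T S) (n : ℕ) : W.IsAdjointPair (T ^ n) (S ^ n) := by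
  induction n with
  | zero => exact fun ξ η => rfl
  | succ n ih =>
    rw [pow_succ T, pow_succ' S]
    exact ih.comp h

lemma map_sm (h : W.IsAdjointPair T S) (z : W.X) (b : B) : T (W.sm z b) = W.sm (T z) b := by
  have hip : ∀ η, W.ip (T (W.sm z b) - W.sm (T z) b) η = 0 := fun η => by
    rw [ip_sub_left, h, ip_sm_left, ip_sm_left, h, sub_self]
  exact sub_eq_zero.mp (W.eq_zero_of_ip_self_eq_zero (hip _))

lemma norm_apply_sq_le (h : W.IsAdjointPair T S) (ζ : W.X) : ‖T ζ‖ ^ 2 ≤ ‖S ∘L T‖ * ‖ζ‖ ^ 2 := by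
  calc ‖T ζ‖ ^ 2 = ‖W.ip ζ (S (T ζ))‖ := by rw [W.ip_norm, h]
    _ ≤ ‖ζ‖ * ‖(S ∘L T) ζ‖ := W.ip_bound _ _
    _ ≤ ‖ζ‖ * (‖S ∘L T‖ * ‖ζ‖) := by gcongr; exact (S ∘L T).le_opNorm ζ
    _ = ‖S ∘L T‖ * ‖ζ‖ ^ 2 := by ring

lemma norm_sq_le (h : W.IsAdjointPair T S) : ‖T‖ ^ 2 ≤ ‖S ∘L T‖ := by
  have hT : ‖T‖ ≤ √‖S ∘L T‖ := T.opNorm_le_bound (Real.sqrt_nonneg _) fun ζ => by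
    rw [← Real.sqrt_sq (norm_nonneg (T ζ)), ← Real.sqrt_sq (norm_nonneg ζ), ← Real.sqrt_mul
      (norm_nonneg _)]
    exact Real.sqrt_le_sqrt (h.norm_apply_sq_le ζ)
  calc ‖T‖ ^ 2 ≤ √‖S ∘L T‖ ^ 2 := by gcongr
    _ = ‖S ∘L T‖ := Real.sq_sqrt (norm_nonneg _)

lemma norm_le (h : W.IsAdjointPair T S) : ‖S‖ ≤ ‖T‖ := by
  have h1 := h.symm.norm_sq_le.trans (T.opNorm_comp_le S)
  nlinarith [norm_nonneg S, norm_nonneg T]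

lemma norm_pow_two_pow_le (h : W.IsAdjointPair T T) (k : ℕ) : ‖T‖ ^ 2 ^ k ≤ ‖T ^ 2 ^ k‖ := by
  induction k with
  | zero => simp
  | succ k ih =>
    calc ‖T‖ ^ 2 ^ (k + 1) = (‖T‖ ^ 2 ^ k) ^ 2 := by rw [pow_succ, pow_mul]
      _ ≤ ‖T ^ 2 ^ k‖ ^ 2 := pow_le_pow_left₀ (by positivity) ih 2
      _ ≤ ‖(T ^ 2 ^ k) ∘L (T ^ 2 ^ k)‖ := (h.pow _).norm_sq_le
      _ = ‖T ^ 2 ^ (k + 1)‖ := by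
        rw [pow_succ 2 k, mul_two, pow_add, ContinuousLinearMap.mul_def]

end IsAdjointPair

lemma isAdjointPair_lmul (a : A) : W.IsAdjointPair (W.lmul a) (W.lmul (star a)) :=
  W.la_adj a

lemma lmul_mul (a a' : A) : W.lmul (a * a') = W.lmul a ∘L W.lmul a' :=
  ContinuousLinearMap.ext (W.la_mul a a')

lemma lmul_zero : W.lmul 0 = 0 :=
  ContinuousLinearMap.ext fun x => by simpa using W.la_smul' 0 0 x

lemma norm_rankOne_le (x y : W.X) : ‖W.rankOne x y‖ ≤ ‖x‖ * ‖y‖ :=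
  LinearMap.mkContinuous_norm_le _ (by positivity) _

lemma isAdjointPair_rankOne (x y : W.X) : W.IsAdjointPair (W.rankOne x y) (W.rankOne y x) :=
  fun ξ η => by rw [rankOne_apply, rankOne_apply, ip_sm_left, W.ip_sm, W.ip_star]

lemma isAdjointPair_sum_rankOne {n : ℕ} (x y : Fin n → W.X) :
    W.IsAdjointPair (∑ i, W.rankOne (x i) (y i)) (∑ i, W.rankOne (y i) (x i)) := fun ξ η => by
  simp only [sum_apply, ip_sum_left, ip_sum_right, isAdjointPair_rankOne _ _ ξ η]

namespace IsAdjointPair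

variable {T S : W.X →L[ℂ] W.X}

lemma comp_sum_rankOne (h : W.IsAdjointPair T S) {n : ℕ} (x y : Fin n → W.X) :
    T ∘L (∑ i, W.rankOne (x i) (y i)) = ∑ i, W.rankOne (T (x i)) (y i) := by
  ext z
  simp only [ContinuousLinearMap.comp_apply, sum_apply, map_sum, rankOne_apply, h.map_sm]

lemma rankOne_comp (h : W.IsAdjointPair T S) (x y : W.X) :
    W.rankOne x y ∘L T = W.rankOne x (S y) := by
  ext z
  rw [ContinuousLinearMap.comp_apply, rankOne_apply, rankOne_apply, h.symm]

lemma comp_mem_compacts (h : W.IsAdjointPair T S) {K : W.X →L[ℂ] W.X} (hK : K ∈ W.compacts) :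
    K ∘L T ∈ W.compacts := by
  let R := (ContinuousLinearMap.compL ℂ W.X W.X W.X).flip T
  have hspan : Submodule.map R.toLinearMap
      (Submodule.span ℂ (Set.range fun p : W.X × W.X => W.rankOne p.1 p.2)) ≤
      Submodule.span ℂ (Set.range fun p : W.X × W.X => W.rankOne p.1 p.2) := by
    rw [Submodule.map_span_le]
    rintro _ ⟨⟨x, y⟩, rfl⟩
    exact Submodule.subset_span ⟨(x, S y), (h.rankOne_comp x y).symm⟩
  exact closure_mono hspan (image_closure_subset_closure_image R.continuous ⟨K, hK, rfl⟩)

end IsAdjointPair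

lemma mem_span_rankOne_iff {T : W.X →L[ℂ] W.X} :
    T ∈ Submodule.span ℂ (Set.range fun p : W.X × W.X => W.rankOne p.1 p.2) ↔
      ∃ (n : ℕ) (x y : Fin n → W.X), T = ∑ i, W.rankOne (x i) (y i) := by
  refine ⟨fun hT => ?_, ?_⟩
  · induction hT using Submodule.span_induction with
    | mem T hT =>
      obtain ⟨⟨x, y⟩, rfl⟩ := hT
      exact ⟨1, fun _ => x, fun _ => y, by simp⟩
    | zero => exact ⟨0, Fin.elim0, Fin.elim0, by simp⟩
    | add T T' _ _ hT hT' =>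
      obtain ⟨n, x, y, rfl⟩ := hT
      obtain ⟨m, x', y', rfl⟩ := hT'
      exact ⟨n + m, Fin.append x x', Fin.append y y', by simp [Fin.sum_univ_add]⟩
    | smul c T _ hT =>
      obtain ⟨n, x, y, rfl⟩ := hT
      refine ⟨n, fun i => c • x i, y, ?_⟩
      ext z
      simp [Finset.smul_sum, W.sm_smul]
  · rintro ⟨n, x, y, rfl⟩
    exact Submodule.sum_mem _ fun i _ => Submodule.subset_span ⟨(x i, y i), rfl⟩

end Corr

namespace SubCorr

variable {A B : Type u} [NonUnitalCStarAlgebra A] [NonUnitalCStarAlgebra B]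
  {E : Corr A A} {F : Corr B B} (sc : SubCorr E F)

def ϕHom : A →⋆ₙₐ[ℂ] B where
  toFun := sc.ϕ
  map_smul' := sc.ϕ_smul
  map_zero' := by simpa using sc.ϕ_smul 0 0
  map_add' := sc.ϕ_add
  map_mul' := sc.ϕ_mul
  map_star' := sc.ϕ_star

def φdL : E.X →ₗ[ℂ] F.X where
  toFun := sc.φd
  map_add' := sc.φd_add
  map_smul' := sc.φd_smul

lemma norm_ϕ (a : A) : ‖sc.ϕ a‖ = ‖a‖ :=
  NonUnitalStarAlgHom.norm_map sc.ϕHom sc.ϕ_inj a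

lemma norm_φd (x : E.X) : ‖sc.φd x‖ = ‖x‖ := by
  have h : ‖sc.φd x‖ ^ 2 = ‖x‖ ^ 2 := by rw [F.ip_norm, sc.ip_eq, sc.norm_ϕ, E.ip_norm]
  exact (sq_eq_sq₀ (norm_nonneg _) (norm_nonneg _)).mp h

lemma continuous_φd : Continuous sc.φd :=
  (AddMonoidHomClass.isometry_of_norm sc.φdL sc.norm_φd).continuous

lemma φd_sub (x y : E.X) : sc.φd (x - y) = sc.φd x - sc.φd y := map_sub sc.φdL x y

lemma φd_sum {ι : Type*} (s : Finset ι) (f : ι → E.X) :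
    sc.φd (∑ i ∈ s, f i) = ∑ i ∈ s, sc.φd (f i) :=
  map_sum sc.φdL f s

lemma φd_sm (x : E.X) (a : A) : sc.φd (E.sm x a) = F.sm (sc.φd x) (sc.ϕ a) := by
  set v := sc.φd (E.sm x a)
  set w := F.sm (sc.φd x) (sc.ϕ a)
  -- all four inner products of `v` and `w` equal `ϕ ⟨x a, x a⟩`
  have hvv : F.ip v v = sc.ϕ (E.ip (E.sm x a) (E.sm x a)) := sc.ip_eq _ _
  have hvw : F.ip v w = sc.ϕ (E.ip (E.sm x a) (E.sm x a)) := by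
    rw [F.ip_sm, sc.ip_eq, ← sc.ϕ_mul, ← E.ip_sm]
  have hwv : F.ip w v = sc.ϕ (E.ip (E.sm x a) (E.sm x a)) := by
    rw [F.ip_sm_left, ← sc.ϕ_star, sc.ip_eq, ← sc.ϕ_mul, ← E.ip_sm_left]
  have hww : F.ip w w = sc.ϕ (E.ip (E.sm x a) (E.sm x a)) := by
    rw [F.ip_sm, F.ip_sm_left, sc.ip_eq, ← sc.ϕ_star, ← sc.ϕ_mul, ← sc.ϕ_mul, ← E.ip_sm_left,
      ← E.ip_sm]
  refine sub_eq_zero.mp (F.eq_zero_of_ip_self_eq_zero ?_)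
  rw [F.ip_sub_right, F.ip_sub_left, F.ip_sub_left, hvv, hvw, hwv, hww, sub_self]

end SubCorr

lemma le_of_forall_pow_two_pow_le {r t C : ℝ} (hr : 0 ≤ r)
    (h : ∀ k : ℕ, t ^ 2 ^ k ≤ r ^ (2 ^ k - 1) * C) : t ≤ r := by
  by_contra! hrt
  obtain rfl | hr0 := hr.eq_or_lt
  · have h1 : t ^ 2 ≤ 0 := by simpa using h 1
    nlinarith
  · have hq : 1 < t / r := (one_lt_div hr0).mpr hrt
    obtain ⟨k, hk⟩ := pow_unbounded_of_one_lt (C / r) hq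
    have hK : 2 ^ k = 2 ^ k - 1 + 1 := (Nat.sub_add_cancel Nat.one_le_two_pow).symm
    have hCq : C < r * (t / r) ^ 2 ^ k := by
      calc C < r * (t / r) ^ k := by rwa [div_lt_iff₀' hr0] at hk
        _ ≤ r * (t / r) ^ 2 ^ k := by
          gcongr
          exacts [hq.le, Nat.lt_two_pow_self.le]
    have h1 : r * t ^ 2 ^ k ≤ r ^ 2 ^ k * C :=
      calc r * t ^ 2 ^ k ≤ r * (r ^ (2 ^ k - 1) * C) := by gcongr; exact h k
        _ = r ^ 2 ^ k * C := by rw [← mul_assoc, ← pow_succ', ← hK]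
    have h2 : r ^ 2 ^ k * C < r * t ^ 2 ^ k :=
      calc r ^ 2 ^ k * C < r ^ 2 ^ k * (r * (t / r) ^ 2 ^ k) := by gcongr
        _ = r * t ^ 2 ^ k := by rw [div_pow]; field_simp
    linarith

namespace SubCorr

variable {A B : Type u} [NonUnitalCStarAlgebra A] [NonUnitalCStarAlgebra B]
  {E : Corr A A} {F : Corr B B}

def Induces (sc : SubCorr E F) (T : E.X →L[ℂ] E.X) (S : F.X →L[ℂ] F.X) : Prop :=
  ∀ (x : E.X) (b : B), S (F.sm (sc.φd x) b) = F.sm (sc.φd (T x)) b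

variable {sc : SubCorr E F} {T T' : E.X →L[ℂ] E.X} {S S' : F.X →L[ℂ] F.X}

lemma dense_span_sm_φd (sc : SubCorr E F) :
    Dense (Submodule.span ℂ {y : F.X | ∃ x b, y = F.sm (sc.φd x) b} : Set F.X) :=
  dense_of_clspan_eq_univ sc.dense

lemma induces_sum_rankOne {n : ℕ} (x y : Fin n → E.X) :
    sc.Induces (∑ i, E.rankOne (x i) (y i)) (∑ i, F.rankOne (sc.φd (x i)) (sc.φd (y i))) :=
  fun z b => by
    simp only [sum_apply, sc.φd_sum, ← F.smL_apply, map_sum]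
    refine Finset.sum_congr rfl fun i _ => ?_
    simp only [Corr.smL_apply, Corr.rankOne_apply, F.ip_sm, sc.ip_eq, F.sm_mul, sc.φd_sm]

lemma induces_lmul (a : A) : sc.Induces (E.lmul a) (F.lmul (sc.ϕ a)) := fun x b => by
  rw [Corr.lmul_apply, Corr.lmul_apply, F.la_sm, sc.la_eq]

lemma norm_sum_rankOne_φd_le {n : ℕ} (x y : Fin n → E.X) :
    ‖∑ i, F.rankOne (sc.φd (x i)) (sc.φd (y i))‖ ≤ ∑ i, ‖x i‖ * ‖y i‖ :=
  (norm_sum_le _ _).trans <| Finset.sum_le_sum fun i _ => by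
    simpa only [sc.norm_φd] using F.norm_rankOne_le (sc.φd (x i)) (sc.φd (y i))

namespace Induces

lemma unique (h : sc.Induces T S) (h' : sc.Induces T S') : S = S' :=
  ContinuousLinearMap.ext_on sc.dense_span_sm_φd (by rintro _ ⟨x, b, rfl⟩; rw [h, h'])

lemma comp (h : sc.Induces T S) (h' : sc.Induces T' S') : sc.Induces (T ∘L T') (S ∘L S') :=
  fun x b => by rw [ContinuousLinearMap.comp_apply, h', h]; rfl

lemma pow (h : sc.Induces T S) (n : ℕ) : sc.Induces (T ^ n) (S ^ n) := by
  induction n with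
  | zero => exact fun x b => rfl
  | succ n ih => rw [pow_succ, pow_succ]; exact ih.comp h

lemma sub (h : sc.Induces T S) (h' : sc.Induces T' S') : sc.Induces (T - T') (S - S') :=
  fun x b => by rw [sub_apply, h, h', sub_apply, sc.φd_sub, F.sm_sub_left]

lemma isAdjointPair (hT : E.IsAdjointPair T T') (h : sc.Induces T S) (h' : sc.Induces T' S') :
    F.IsAdjointPair S S' := by
  have hgen : ∀ x b η, F.ip (S (F.sm (sc.φd x) b)) η = F.ip (F.sm (sc.φd x) b) (S' η) := by
    intro x b
    refine DFunLike.congr_fun (?_ : F.ipL _ = F.ipL _ ∘L S')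
    refine ContinuousLinearMap.ext_on sc.dense_span_sm_φd ?_
    rintro _ ⟨x', b', rfl⟩
    simp only [Corr.ipL_apply, ContinuousLinearMap.comp_apply, h x b, h' x' b', F.ip_sm,
      F.ip_sm_left, sc.ip_eq, hT x x']
  intro ζ η
  have hleft : F.ipL η ∘L S = F.ipL (S' η) := by
    refine ContinuousLinearMap.ext_on sc.dense_span_sm_φd ?_
    rintro _ ⟨x, b, rfl⟩
    simp only [Corr.ipL_apply, ContinuousLinearMap.comp_apply]
    rw [F.ip_swap, hgen, ← F.ip_swap]
  rw [F.ip_swap, ← Corr.ipL_apply, ← ContinuousLinearMap.comp_apply, hleft, Corr.ipL_apply,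
    ← F.ip_swap]

/-- The spectral-radius argument: `‖S‖ ^ 2 ^ k ≤ ‖S ^ 2 ^ k‖`, and `S ^ 2 ^ k` is the
finite-rank operator induced by `T ^ 2 ^ k`, of norm at most `‖T‖ ^ (2 ^ k - 1) ∑ ‖xᵢ‖ ‖yᵢ‖`. -/
lemma norm_le_of_isAdjointPair_self {n : ℕ} {x y : Fin n → E.X}
    (hT : T = ∑ i, E.rankOne (x i) (y i)) (hadj : E.IsAdjointPair T T) (h : sc.Induces T S) :
    ‖S‖ ≤ ‖T‖ := by
  refine le_of_forall_pow_two_pow_le (C := ∑ i, ‖x i‖ * ‖y i‖) (norm_nonneg T) fun k => ?_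
  obtain ⟨m, hm⟩ : ∃ m, 2 ^ k = m + 1 := Nat.exists_eq_add_one.mpr (by positivity)
  have hpow : T ^ (m + 1) = ∑ i, E.rankOne ((T ^ m) (x i)) (y i) := by
    rw [pow_succ, ContinuousLinearMap.mul_def, ← (hadj.pow m).comp_sum_rankOne, ← hT]
  have hSpow : S ^ (m + 1) = ∑ i, F.rankOne (sc.φd ((T ^ m) (x i))) (sc.φd (y i)) :=
    (h.pow _).unique (hpow ▸ induces_sum_rankOne _ _)
  have hTm : ‖T ^ m‖ ≤ ‖T‖ ^ m := by
    cases m with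
    | zero => rw [pow_zero, pow_zero]; exact ContinuousLinearMap.norm_id_le
    | succ m => exact norm_pow_le' T m.succ_pos
  calc ‖S‖ ^ 2 ^ k ≤ ‖S ^ 2 ^ k‖ := (h.isAdjointPair hadj h).norm_pow_two_pow_le k
    _ ≤ ∑ i, ‖(T ^ m) (x i)‖ * ‖y i‖ := by rw [hm, hSpow]; exact norm_sum_rankOne_φd_le _ _
    _ ≤ ∑ i, ‖T‖ ^ m * ‖x i‖ * ‖y i‖ := by
      gcongr with i
      exact ((T ^ m).le_opNorm _).trans (by gcongr)
    _ = ‖T‖ ^ (2 ^ k - 1) * ∑ i, ‖x i‖ * ‖y i‖ := by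
      rw [hm, Nat.add_sub_cancel, Finset.mul_sum]
      simp only [mul_assoc]

lemma norm_le {n : ℕ} {x y : Fin n → E.X} (hT : T = ∑ i, E.rankOne (x i) (y i))
    (h : sc.Induces T S) : ‖S‖ ≤ ‖T‖ := by
  subst hT
  have hadj := E.isAdjointPair_sum_rankOne x y
  have h' := induces_sum_rankOne (sc := sc) y x
  have hT'T := (h'.comp h).norm_le_of_isAdjointPair_self
    (hadj.symm.comp_sum_rankOne x y) (hadj.symm.comp hadj)
  have := (h.isAdjointPair hadj h').norm_sq_le.trans (hT'T.trans
    ((ContinuousLinearMap.opNorm_comp_le _ _).trans (mul_le_mul_of_nonneg_right hadj.norm_le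
      (norm_nonneg _))))
  nlinarith [norm_nonneg S, norm_nonneg (∑ i, E.rankOne (x i) (y i))]

lemma exists_of_mem_compacts (hT : T ∈ E.compacts) : ∃ S ∈ F.compacts, sc.Induces T S := by
  obtain ⟨Tseq, hTmem, hlim⟩ := mem_closure_iff_seq_limit.mp hT
  choose n x y hxy using fun m => Corr.mem_span_rankOne_iff.mp (hTmem m)
  let Sseq m := ∑ i, F.rankOne (sc.φd (x m i)) (sc.φd (y m i))
  have hind : ∀ m, sc.Induces (Tseq m) (Sseq m) := fun m => hxy m ▸ induces_sum_rankOne _ _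
  have hdist : ∀ m l, dist (Sseq m) (Sseq l) ≤ dist (Tseq m) (Tseq l) := fun m l => by
    obtain ⟨_, _, _, hsub⟩ := Corr.mem_span_rankOne_iff.mp (sub_mem (hTmem m) (hTmem l))
    simpa only [dist_eq_norm] using ((hind m).sub (hind l)).norm_le hsub
  have hcauchy : CauchySeq Sseq := Metric.cauchySeq_iff.mpr fun ε hε =>
    (Metric.cauchySeq_iff.mp hlim.cauchySeq ε hε).imp fun N hN m hm l hl =>
      (hdist m l).trans_lt (hN m hm l hl)
  obtain ⟨S, hS⟩ := cauchySeq_tendsto_of_complete hcauchy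
  refine ⟨S, mem_closure_of_tendsto hS (Eventually.of_forall fun m =>
    Corr.mem_span_rankOne_iff.mpr ⟨_, _, _, rfl⟩), fun z b => ?_⟩
  have hcont : Continuous fun w : E.X => F.sm (sc.φd w) b :=
    (F.smL b).continuous.comp sc.continuous_φd
  refine tendsto_nhds_unique ((continuous_eval_const _).tendsto S |>.comp hS) ?_
  simp only [Function.comp_def, hind _ z b]
  exact (hcont.tendsto _).comp (((continuous_eval_const z).tendsto T).comp hlim)

end Induces

lemma lmul_ϕ_mem_compacts {a : A} (ha : E.lmul a ∈ E.compacts) :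
    F.lmul (sc.ϕ a) ∈ F.compacts := by
  obtain ⟨S, hS, h⟩ := Induces.exists_of_mem_compacts (sc := sc) ha
  rwa [h.unique (induces_lmul a)] at hS

lemma ϕ_mul_mem_katsuraIdeal (sc : SubCorr E F) (hF : F.Injective) {a : A}
    (ha : a ∈ E.katsuraIdeal) (b : B) : sc.ϕ a * b ∈ F.katsuraIdeal := by
  refine ⟨?_, fun b' hb' => ?_⟩
  · rw [Corr.lmul_mul]
    exact (Corr.isAdjointPair_lmul b).comp_mem_compacts (lmul_ϕ_mem_compacts ha.1)
  · rw [hF (hb'.trans Corr.lmul_zero.symm), mul_zero]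

end SubCorr

lemma mem_closure_mul_left {D : Type*} [NonUnitalCStarAlgebra D] (c : D) :
    c ∈ closure {x | ∃ e : D, x = e * c} := by
  let := CStarAlgebra.spectralOrder D
  have := CStarAlgebra.spectralOrderedRing D
  exact mem_closure_of_tendsto ((CStarAlgebra.increasingApproximateUnit D).tendsto_mul_right c)
    (Eventually.of_forall fun e => ⟨e, rfl⟩)

namespace PullCorr

variable {A D : Type u} [NonUnitalCStarAlgebra A] [NonUnitalCStarAlgebra D] {ψ : A → D}
  {C : Corr A D}

def uL (pc : PullCorr ψ C) : D →ₗ[ℂ] C.X where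
  toFun := pc.u
  map_add' := pc.add
  map_smul' := pc.smul

lemma u_sub (pc : PullCorr ψ C) (d d' : D) : pc.u (d - d') = pc.u d - pc.u d' := map_sub pc.uL d d'

lemma norm_u (pc : PullCorr ψ C) (d : D) : ‖pc.u d‖ = ‖d‖ := by
  have h : ‖pc.u d‖ ^ 2 = ‖d‖ ^ 2 := by rw [C.ip_norm, pc.ip, CStarRing.norm_star_mul_self, sq]
  exact (sq_eq_sq₀ (norm_nonneg _) (norm_nonneg _)).mp h

lemma continuous_u (pc : PullCorr ψ C) : Continuous pc.u :=
  (AddMonoidHomClass.isometry_of_norm pc.uL pc.norm_u).continuous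

lemma u_mem_smSet (pc : PullCorr ψ C) {J : Set D} {c : D} (hc : c ∈ J) : pc.u c ∈ C.smSet J := by
  have hgen : pc.u '' {x | ∃ e : D, x = e * c} ⊆ C.smSet J := by
    rintro _ ⟨_, ⟨e, rfl⟩, rfl⟩
    exact subset_closure (Submodule.subset_span ⟨pc.u e, c, hc, (pc.sm e c).symm⟩)
  exact closure_minimal hgen isClosed_closure
    (image_closure_subset_closure_image pc.continuous_u ⟨c, mem_closure_mul_left c, rfl⟩)

lemma lmul_injective (pc : PullCorr ψ C) (hψ : Function.Injective ψ) :
    Function.Injective C.lmul := by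
  intro a a' h
  have hd : ∀ d, (ψ a - ψ a') * d = 0 := fun d => by
    rw [sub_mul, sub_eq_zero]
    exact pc.bij.1 (by rw [← pc.la, ← pc.la, ← Corr.lmul_apply, ← Corr.lmul_apply, h])
  exact hψ (sub_eq_zero.mp ((CStarRing.mul_star_self_eq_zero_iff _).mp (hd _)))

/-- `C.lmul a` is left multiplication by `ψ a`, which is approximated by the rank-one
operators `θ_{e, ψ(a)⋆}`, i.e. by left multiplication with `e ψ(a)`. -/
lemma lmul_mem_compacts (pc : PullCorr ψ C) (a : A) : C.lmul a ∈ C.compacts := by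
  refine Metric.mem_closure_iff.mpr fun ε hε => ?_
  obtain ⟨_, ⟨e, rfl⟩, he⟩ := Metric.mem_closure_iff.mp (mem_closure_mul_left (ψ a)) ε hε
  refine ⟨_, Submodule.subset_span ⟨(pc.u e, pc.u (star (ψ a))), rfl⟩, lt_of_le_of_lt ?_ he⟩
  rw [dist_eq_norm, dist_eq_norm]
  refine ContinuousLinearMap.opNorm_le_bound _ (norm_nonneg _) fun z => ?_
  obtain ⟨d, rfl⟩ := pc.bij.2 z
  rw [sub_apply, Corr.lmul_apply, Corr.rankOne_apply, pc.ip, star_star, pc.sm, pc.la,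
    ← mul_assoc, ← pc.u_sub, pc.norm_u, pc.norm_u, ← sub_mul]
  exact norm_mul_le _ _

lemma regular (pc : PullCorr ψ C) (hψ : Function.Injective ψ) : C.Regular :=
  ⟨pc.lmul_injective hψ, pc.lmul_mem_compacts⟩

end PullCorr

namespace Corr

variable {A B C D : Type u} [NonUnitalCStarAlgebra A] [NonUnitalCStarAlgebra B]
  [NonUnitalCStarAlgebra C] [NonUnitalCStarAlgebra D] {M : Corr A B} {N : Corr C B}

lemma isometry_of_ip (Φ : M.X →L[ℂ] N.X) (hΦ : ∀ x y, N.ip (Φ x) (Φ y) = M.ip x y) :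
    Isometry Φ :=
  AddMonoidHomClass.isometry_of_norm Φ fun x => N.norm_eq_norm_of_ip (hΦ x x)

lemma surjective_of_ip (Φ : M.X →L[ℂ] N.X) (hΦ : ∀ x y, N.ip (Φ x) (Φ y) = M.ip x y)
    {s : Set N.X} (hs : s ⊆ Set.range Φ) (hdense : clspan s = Set.univ) :
    Function.Surjective Φ := by
  have hspan : (Submodule.span ℂ s : Set N.X) ⊆ Set.range Φ := fun y hy =>
    LinearMap.mem_range.mp (Submodule.span_le (p := LinearMap.range (Φ : M.X →ₗ[ℂ] N.X)) |>.mpr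
      hs hy)
  have hclosed := (isometry_of_ip Φ hΦ).isClosedEmbedding.isClosed_range
  intro y
  have hy : y ∈ clspan s := hdense ▸ Set.mem_univ y
  exact closure_minimal hspan hclosed hy

lemma map_la_of_clspan_eq_univ {K : Corr D B} (Φ : M.X →L[ℂ] K.X) (ψ : A → D) {s : Set M.X}
    (hs : clspan s = Set.univ) (h : ∀ a, ∀ x ∈ s, Φ (M.la a x) = K.la (ψ a) (Φ x)) (a : A)
    (x : M.X) : Φ (M.la a x) = K.la (ψ a) (Φ x) :=
  DFunLike.congr_fun (ContinuousLinearMap.ext_on (dense_of_clspan_eq_univ hs)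
    (f := Φ ∘L M.lmul a) (g := K.lmul (ψ a) ∘L Φ) (h a)) x

lemma exists_corrIso_of_ip {M N : Corr A B} {K : Corr D B} {ψ : A → D}
    (f : M.X →L[ℂ] K.X) (g : N.X →L[ℂ] K.X)
    (hf : ∀ x y, K.ip (f x) (f y) = M.ip x y) (hg : ∀ x y, K.ip (g x) (g y) = N.ip x y)
    (hfs : Function.Surjective f) (hgs : Function.Surjective g)
    (hfa : ∀ a x, f (M.la a x) = K.la (ψ a) (f x)) (hga : ∀ a x, g (N.la a x) = K.la (ψ a) (g x)) :
    ∃ U : CorrIso M N, ∀ x, g (U.toFun x) = f x := by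
  let ef := LinearEquiv.ofBijective f.toLinearMap ⟨(isometry_of_ip f hf).injective, hfs⟩
  let eg := LinearEquiv.ofBijective g.toLinearMap ⟨(isometry_of_ip g hg).injective, hgs⟩
  have hU : ∀ x, g (eg.symm (f x)) = f x := fun x => eg.apply_symm_apply (f x)
  refine ⟨{ toFun := fun x => eg.symm (f x)
            invFun := fun y => ef.symm (g y)
            left_inv := fun x => by
              change ef.symm (g (eg.symm (f x))) = x
              rw [hU]
              exact ef.symm_apply_apply x
            right_inv := fun y => by
              change eg.symm (f (ef.symm (g y))) = y
              rw [show f (ef.symm (g y)) = g y from ef.apply_symm_apply (g y)]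
              exact eg.symm_apply_apply y
            map_add := fun x y => by simp
            map_smul := fun c x => by simp
            map_la := fun a x => eg.injective ?_
            map_ip := fun x y => by rw [← hg, hU, hU, hf] }, hU⟩
  change g _ = g _
  rw [hU, hga, hU, hfa]

end Corr

namespace TensorData

variable {A B D G : Type u} [NonUnitalCStarAlgebra A] [NonUnitalCStarAlgebra B]
  [NonUnitalCStarAlgebra D] [NonUnitalCStarAlgebra G]

lemma clspan_mk2_u {E : Corr A B} {P : Corr B D} {T : Corr A D} {ψ : B → D}
    (td : TensorData E P T) (pc : PullCorr ψ P) :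
    clspan (Set.range fun p : E.X × D => td.mk2 p.1 (pc.u p.2)) = Set.univ := by
  rw [← td.dense]
  exact congrArg clspan ((Function.surjective_id.prodMap pc.bij.2).range_comp
    fun p : E.X × P.X => td.mk2 p.1 p.2)

lemma clspan_u_mk2 {P : Corr A D} {F : Corr D G} {T : Corr A G} {ψ : A → D}
    (td : TensorData P F T) (pc : PullCorr ψ P) :
    clspan (Set.range fun p : D × F.X => td.mk2 (pc.u p.1) p.2) = Set.univ := by
  rw [← td.dense]
  exact congrArg clspan ((pc.bij.2.prodMap Function.surjective_id).range_comp
    fun p : P.X × F.X => td.mk2 p.1 p.2)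

end TensorData

lemma PullCorr.exists_unitary_of_tensor {A D G : Type u} [NonUnitalCStarAlgebra A]
    [NonUnitalCStarAlgebra D] [NonUnitalCStarAlgebra G] {ψ : A → D} {P : Corr A D}
    {F : Corr D G} {T : Corr A G} (pc : PullCorr ψ P) (td : TensorData P F T) :
    ∃ j : T.X →L[ℂ] F.X, (∀ d y, j (td.mk2 (pc.u d) y) = F.la d y) ∧
      (∀ ζ η, F.ip (j ζ) (j η) = T.ip ζ η) ∧ Function.Surjective j ∧
      ∀ a ζ, j (T.la a ζ) = F.la (ψ a) (j ζ) := by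
  obtain ⟨j, hgen, hip⟩ := T.exists_extension (N := F)
    (fun p : D × F.X => td.mk2 (pc.u p.1) p.2) (fun p => F.la p.1 p.2)
    (by rintro ⟨d, y⟩ ⟨d', y'⟩; simp only [td.ip_mk, pc.ip, F.la_adj, F.la_mul])
    (td.clspan_u_mk2 pc)
  have hj : ∀ d y, j (td.mk2 (pc.u d) y) = F.la d y := fun d y => hgen (d, y)
  refine ⟨j, hj, hip, Corr.surjective_of_ip j hip ?_ F.nondeg,
    Corr.map_la_of_clspan_eq_univ j ψ (td.clspan_u_mk2 pc) ?_⟩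
  · rintro _ ⟨d, y, rfl⟩
    exact ⟨_, hj d y⟩
  · rintro a _ ⟨⟨d, y⟩, rfl⟩
    simp only [td.la_mk, pc.la, hj, F.la_mul]

lemma SubCorr.exists_unitary_of_tensor {A B : Type u} [NonUnitalCStarAlgebra A]
    [NonUnitalCStarAlgebra B] {E : Corr A A} {F : Corr B B} (sc : SubCorr E F)
    {P : Corr A B} {T : Corr A B} (pc : PullCorr sc.ϕ P) (td : TensorData E P T) :
    ∃ ξ : T.X →L[ℂ] F.X, (∀ x b, ξ (td.mk2 x (pc.u b)) = F.sm (sc.φd x) b) ∧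
      (∀ ζ η, F.ip (ξ ζ) (ξ η) = T.ip ζ η) ∧ Function.Surjective ξ ∧
      ∀ a ζ, ξ (T.la a ζ) = F.la (sc.ϕ a) (ξ ζ) := by
  obtain ⟨ξ, hgen, hip⟩ := T.exists_extension (N := F)
    (fun p : E.X × B => td.mk2 p.1 (pc.u p.2)) (fun p => F.sm (sc.φd p.1) p.2)
    (by
      rintro ⟨x, b⟩ ⟨x', b'⟩
      simp only [td.ip_mk, pc.la, pc.ip, F.ip_sm, F.ip_sm_left, sc.ip_eq, mul_assoc])
    (td.clspan_mk2_u pc)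
  have hξ : ∀ x b, ξ (td.mk2 x (pc.u b)) = F.sm (sc.φd x) b := fun x b => hgen (x, b)
  refine ⟨ξ, hξ, hip, Corr.surjective_of_ip ξ hip ?_ sc.dense,
    Corr.map_la_of_clspan_eq_univ ξ sc.ϕ (td.clspan_mk2_u pc) ?_⟩
  · rintro _ ⟨x, b, rfl⟩
    exact ⟨_, hξ x b⟩
  · rintro a _ ⟨⟨x, b⟩, rfl⟩
    simp only [td.la_mk, hξ, sc.la_eq, F.la_sm]

lemma SubCorr.katsuraCompat {A B : Type u} [NonUnitalCStarAlgebra A] [NonUnitalCStarAlgebra B]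
    {E : Corr A A} {F : Corr B B} (sc : SubCorr E F) {P : Corr A B} (pc : PullCorr sc.ϕ P)
    (H : ∀ a ∈ E.katsuraIdeal, ∀ b : B, sc.ϕ a * b ∈ F.katsuraIdeal) : KatsuraCompat E P F := by
  intro a ha m
  obtain ⟨b, rfl⟩ := pc.bij.2 m
  rw [pc.la]
  exact pc.u_mem_smSet (H a ha b)

/-- Let `X` (over `A`) be a nondegenerate subcorrespondence of `Y`
(over `B`) via `(φ̇, ϕ)`, and regard `B` as an `A–B` correspondence via `ϕ`.
If `J_X · B ⊆ J_Y`, then `[B, U_B]` is a morphism `X → Y` in `ECCor`, where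
`U_B = j⁻¹ ∘ ξ` with `ξ(x ⊗ b) = φ̇(x)b` and `j(b ⊗ y) = b · y`.  Moreover
`J_X · B ⊆ J_Y` holds automatically when `Y` is injective. -/
theorem subcorrespondence_gives_morphism
    (A B : Type u) [NonUnitalCStarAlgebra A] [NonUnitalCStarAlgebra B]
    (E : Corr A A) (F : Corr B B)
    (sc : SubCorr E F)
    -- B as an A–B correspondence via ϕ
    (Bc : Corr A B) (pc : PullCorr sc.ϕ Bc)
    -- the tensor products X ⊗_A B and B ⊗_B Y
    (TXB : Corr A B) (td1 : TensorData E Bc TXB)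
    (TBY : Corr A B) (td2 : TensorData Bc F TBY) :
    -- B is a regular A–B correspondence
    Bc.Regular ∧
    -- if J_X · B ⊆ J_Y then [B, U_B] is a morphism in ECCor
    ((∀ a ∈ E.katsuraIdeal, ∀ b : B, sc.ϕ a * b ∈ F.katsuraIdeal) →
      (KatsuraCompat E Bc F ∧
       ∃ (U : CorrIso TXB TBY) (jm : TBY.X → F.X),
         (∀ ζ η, jm (ζ + η) = jm ζ + jm η) ∧
         (∀ (c : ℂ) ζ, jm (c • ζ) = c • jm ζ) ∧
         Continuous jm ∧ Function.Injective jm ∧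
         (∀ (b : B) (y : F.X), jm (td2.mk2 (pc.u b) y) = F.la b y) ∧
         (∀ (x : E.X) (b : B), jm (U.toFun (td1.mk2 x (pc.u b))) = F.sm (sc.φd x) b))) ∧
    -- the condition J_X · B ⊆ J_Y holds automatically when Y is injective
    (F.Injective → ∀ a ∈ E.katsuraIdeal, ∀ b : B, sc.ϕ a * b ∈ F.katsuraIdeal) := by
  obtain ⟨ξ, hξ_mk, hξ_ip, hξ_surj, hξ_la⟩ := sc.exists_unitary_of_tensor pc td1
  obtain ⟨j, hj_mk, hj_ip, hj_surj, hj_la⟩ := pc.exists_unitary_of_tensor td2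
  obtain ⟨U, hU⟩ := Corr.exists_corrIso_of_ip ξ j hξ_ip hj_ip hξ_surj hj_surj hξ_la hj_la
  refine ⟨pc.regular sc.ϕ_inj, fun H => ⟨sc.katsuraCompat pc H, U, j, map_add j, map_smul j,
    j.continuous, (Corr.isometry_of_ip j hj_ip).injective, hj_mk, fun x b => ?_⟩,
    fun hF a ha b => sc.ϕ_mul_mem_katsuraIdeal hF ha b⟩
  rw [hU, hξ_mk]

end
end

section
/- Let X (over A) and Y (over B) be injective C*-correspondences and let X be a nondegenerate subcorrespondence of Y via (φ̇, ϕ). Let (π, Φ) be the C-covariant representation of X on K(B ⊗_B O_Y) associated to the morphism [B, U_B] : X → Y in ECCor, let (Υ_Y, t_Y) be the universal covariant representation of Y, and let ι : K(B ⊗_B O_Y) → O_Y be the natural C*-algebra isomorphism (composing Ad μ with K(O_Y) ≅ O_Y, where μ(b ⊗ S) = Υ_Y(b)S). Then ι(Φ(x)) = t_Y(φ̇(x)) and ι(π(a)) = Υ_Y(ϕ(a)) for all x ∈ X and a ∈ A; consequently C*(π, Φ) is isomorphic to the C*-subalgebra of O_Y generated by t_Y(φ̇(X)) and Υ_Y(ϕ(A)).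 -/
noncomputable section

universe u

/-! The map `μ : B ⊗_B O_Y → O_Y`, `b ⊗ S ↦ Υ_Y(b) S`, satisfies `⟨η, ζ⟩ = μ(η)^* μ(ζ)`, so it is
a unitary of Hilbert `O_Y`-modules, and conjugating left multiplication by it gives an isometric
homomorphism `S ↦ μ⁻¹ ∘ (S ·) ∘ μ` from `O_Y` into the operators on `B ⊗_B O_Y`. Computing on
elementary tensors `b ⊗ S`, it sends `t_Y(φ̇ x)` to `Φ(x)` and `Υ_Y(ϕ a)` to `π(a)`; since it is
compatible with adjoints, it sends `t_Y(φ̇ x)^*` to the adjoint of `Φ(x)`. An isometric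
homomorphism maps the closed algebra generated by a set onto the closed algebra generated by its
image, which gives the last claim. -/

open Topology

theorem CStarRing.eq_of_star_mul_eq {D : Type*} [NonUnitalNormedRing D] [StarRing D] [CStarRing D]
    {u v c : D} (huu : star u * u = c) (huv : star u * v = c) (hvu : star v * u = c)
    (hvv : star v * v = c) : u = v := by
  rw [← sub_eq_zero, ← CStarRing.star_mul_self_eq_zero_iff, star_sub, sub_mul, mul_sub, mul_sub,
    huu, huv, hvu, hvv, sub_self]

theorem NonUnitalAlgHom.preimage_closure_adjoin_image {R A B : Type*} [CommSemiring R]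
    [NonUnitalSemiring A] [Module R A] [IsScalarTower R A A] [SMulCommClass R A A]
    [NonUnitalSemiring B] [Module R B] [IsScalarTower R B B] [SMulCommClass R B B]
    [TopologicalSpace A] [TopologicalSpace B] (f : A →ₙₐ[R] B) (hf : IsInducing f) (s : Set A) :
    f ⁻¹' closure (NonUnitalAlgebra.adjoin R (f '' s)) = closure (NonUnitalAlgebra.adjoin R s) := by
  rw [← NonUnitalAlgHom.map_adjoin, NonUnitalSubalgebra.coe_map,
    ← hf.closure_eq_preimage_closure_image]

namespace LinearIsometryEquiv

variable {X D : Type*} [NormedAddCommGroup X] [NormedSpace ℂ X] [NonUnitalNormedRing D]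
  [NormedSpace ℂ D] [IsScalarTower ℂ D D] [SMulCommClass ℂ D D] (e : X ≃ₗᵢ[ℂ] D)

def conjMul : D →ₙₐ[ℂ] (X →L[ℂ] X) where
  toFun S := (e.symm : D →L[ℂ] X) ∘L ContinuousLinearMap.mul ℂ D S ∘L (e : X →L[ℂ] D)
  map_smul' c S := by ext; simp
  map_zero' := by ext; simp
  map_add' S S' := by ext; simp
  map_mul' S S' := by ext; simp [mul_assoc]

@[simp]
theorem conjMul_apply (S : D) (ζ : X) : e.conjMul S ζ = e.symm (S * e ζ) := rfl

theorem conjMul_eq_iff {S : D} {T : X →L[ℂ] X} : e.conjMul S = T ↔ ∀ ζ, S * e ζ = e (T ζ) := by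
  simp [ContinuousLinearMap.ext_iff, e.symm_apply_eq]

theorem norm_conjMul [RegularNormedAlgebra ℂ D] (S : D) : ‖e.conjMul S‖ = ‖S‖ := by
  rw [← ContinuousLinearMap.opNorm_mul_apply ℂ D S]
  exact (e.symm.toLinearIsometry.norm_toContinuousLinearMap_comp).trans
    (ContinuousLinearMap.opNorm_comp_linearIsometryEquiv _ e)

theorem isInducing_conjMul [RegularNormedAlgebra ℂ D] : IsInducing e.conjMul :=
  (AddMonoidHomClass.isometry_of_norm e.conjMul e.norm_conjMul).isUniformInducing.isInducing

end LinearIsometryEquiv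

namespace Corr

variable {A B : Type u} [NonUnitalCStarAlgebra A] [NonUnitalCStarAlgebra B] (W : Corr A B)

def ipRight (η : W.X) : W.X →L[ℂ] B :=
  LinearMap.mkContinuous
    { toFun := W.ip η
      map_add' := W.ip_add η
      map_smul' := fun c ζ => W.ip_smul c η ζ }
    ‖η‖ (W.ip_bound η)

@[simp]
theorem ipRight_apply (η ζ : W.X) : W.ipRight η ζ = W.ip η ζ := rfl

theorem eq_zero_of_ip_self_eq_zero_s8 {ζ : W.X} (h : W.ip ζ ζ = 0) : ζ = 0 := by
  rw [← norm_eq_zero, ← sq_eq_zero_iff, W.ip_norm, h, norm_zero]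

theorem IsAdjointPair.unique {W : Corr A B} {T S S' : W.X →L[ℂ] W.X} (h : W.IsAdjointPair T S)
    (h' : W.IsAdjointPair T S') : S = S' := by
  ext η
  rw [← sub_eq_zero]
  refine W.eq_zero_of_ip_self_eq_zero_s8 ?_
  rw [← W.ipRight_apply, map_sub, W.ipRight_apply, W.ipRight_apply, ← h, ← h', sub_self]

theorem norm_eq_of_ip_eq_star_mul (μ : W.X → B) (hip : ∀ η ζ, W.ip η ζ = star (μ η) * μ ζ)
    (ζ : W.X) : ‖μ ζ‖ = ‖ζ‖ := by
  refine (sq_eq_sq₀ (norm_nonneg _) (norm_nonneg _)).1 ?_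
  rw [W.ip_norm, hip, CStarRing.norm_star_mul_self, sq]

def linearIsometryEquivOfIp (μ : W.X →ₗ[ℂ] B) (hμ : Function.Bijective μ)
    (hip : ∀ η ζ, W.ip η ζ = star (μ η) * μ ζ) : W.X ≃ₗᵢ[ℂ] B :=
  { LinearEquiv.ofBijective μ hμ with norm_map' := W.norm_eq_of_ip_eq_star_mul μ hip }

theorem isAdjointPair_conjMul (e : W.X ≃ₗᵢ[ℂ] B) (hip : ∀ η ζ, W.ip η ζ = star (e η) * e ζ)
    (S : B) : W.IsAdjointPair (e.conjMul S) (e.conjMul (star S)) := by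
  intro ξ η
  simp [hip, mul_assoc]

theorem setOf_mul_eq_closure_adjoin {ι : Type*} (e : W.X ≃ₗᵢ[ℂ] B)
    (hip : ∀ η ζ, W.ip η ζ = star (e η) * e ζ) (ρ : A → B) (hρ : ∀ a, star (ρ a) = ρ (star a))
    (τ : ι → B) (L : A → W.X →L[ℂ] W.X) (Φ Φs : ι → W.X →L[ℂ] W.X)
    (hL : ∀ a, e.conjMul (ρ a) = L a) (hΦ : ∀ i, e.conjMul (τ i) = Φ i)
    (hΦs : ∀ i, W.IsAdjointPair (Φ i) (Φs i)) :
    {S : B | ∃ T ∈ closure ((NonUnitalAlgebra.adjoin ℂ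
        (Set.range L ∪ Set.range Φ ∪ Set.range Φs) : NonUnitalSubalgebra ℂ _) :
          Set (W.X →L[ℂ] W.X)), ∀ ζ : W.X, S * e ζ = e (T ζ)}
      = closure ((NonUnitalStarAlgebra.adjoin ℂ (Set.range τ ∪ Set.range ρ) :
          NonUnitalStarSubalgebra ℂ B) : Set B) := by
  have hΦs' (i : ι) : e.conjMul (star (τ i)) = Φs i :=
    (hΦ i ▸ W.isAdjointPair_conjMul e hip _).unique (hΦs i)
  have hρs (a : A) : e.conjMul (star (ρ a)) = L (star a) := by rw [hρ, hL]
  have hgen : e.conjMul '' (Set.range τ ∪ Set.range ρ ∪ star (Set.range τ ∪ Set.range ρ)) =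
      Set.range L ∪ Set.range Φ ∪ Set.range Φs := by
    simp only [← Set.image_star, Set.image_union, ← Set.range_comp, Function.comp_def, hL, hΦ,
      hΦs', hρs]
    ext T
    have hstar := star_involutive.surjective.exists (p := fun a => L a = T)
    simp only [Set.mem_union, Set.mem_range] at hstar ⊢
    tauto
  rw [← NonUnitalStarSubalgebra.coe_toNonUnitalSubalgebra,
    NonUnitalStarAlgebra.adjoin_toNonUnitalSubalgebra,
    ← e.conjMul.preimage_closure_adjoin_image e.isInducing_conjMul, hgen]
  ext S
  simp [← e.conjMul_eq_iff]

end Corr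

namespace TensorData

variable {A B C : Type u} [NonUnitalCStarAlgebra A] [NonUnitalCStarAlgebra B]
  [NonUnitalCStarAlgebra C] {E : Corr A B} {F : Corr B C} {T : Corr A C} (td : TensorData E F T)
  {V : Type*} [AddCommGroup V] [Module ℂ V] [TopologicalSpace V] [T2Space V]

theorem ext_clm {f g : T.X →L[ℂ] V} (h : ∀ x y, f (td.mk2 x y) = g (td.mk2 x y)) : f = g :=
  ContinuousLinearMap.ext_on (dense_iff_closure_eq.2 td.dense)
    (by rintro _ ⟨⟨x, y⟩, rfl⟩; exact h x y)

theorem ext_pull {ψ : A → B} {ρ : B → C} (pc : PullCorr ψ E) (pcF : PullCorr ρ F)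
    {f g : T.X →L[ℂ] V}
    (h : ∀ b c, f (td.mk2 (pc.u b) (pcF.u c)) = g (td.mk2 (pc.u b) (pcF.u c))) : f = g :=
  td.ext_clm (pc.bij.surjective.forall.2 fun b => pcF.bij.surjective.forall.2 (h b))

theorem ip_eq_star_mul {ψ : A → B} (pc : PullCorr ψ E) (ρ : B →⋆ₙₐ[ℂ] C) (pcF : PullCorr ρ F)
    (μ : T.X →L[ℂ] C) (hμ : ∀ b c, μ (td.mk2 (pc.u b) (pcF.u c)) = ρ b * c) (η ζ : T.X) :
    T.ip η ζ = star (μ η) * μ ζ := by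
  have ext_right : ∀ η, (∀ b c, T.ip η (td.mk2 (pc.u b) (pcF.u c)) =
      star (μ η) * μ (td.mk2 (pc.u b) (pcF.u c))) → ∀ ζ, T.ip η ζ = star (μ η) * μ ζ :=
    fun η h => DFunLike.congr_fun
      (td.ext_pull pc pcF (f := T.ipRight η) (g := .mul ℂ C (star (μ η)) ∘L μ) h)
  have hmk : ∀ b c b' c', T.ip (td.mk2 (pc.u b) (pcF.u c)) (td.mk2 (pc.u b') (pcF.u c')) =
      star (μ (td.mk2 (pc.u b) (pcF.u c))) * μ (td.mk2 (pc.u b') (pcF.u c')) := by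
    intro b c b' c'
    rw [td.ip_mk, pc.ip, pcF.la, pcF.ip, hμ, hμ, map_mul, map_star]
    simp only [star_mul, mul_assoc]
  refine ext_right η (fun b c => ?_) ζ
  rw [← T.ip_star, ext_right _ (hmk b c), star_mul, star_star]

end TensorData

namespace CorrRep

variable {A D : Type u} [NonUnitalCStarAlgebra A] [NonUnitalCStarAlgebra D] {E : Corr A A}
  (R : CorrRep E D)

def πHom : A →⋆ₙₐ[ℂ] D where
  toFun := R.π
  map_smul' := R.π_smul
  map_zero' := by simpa using R.π_add 0 0
  map_add' := R.π_add
  map_mul' := R.π_mul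
  map_star' := R.π_star

theorem t_norm_le (x : E.X) : ‖R.t x‖ ≤ ‖x‖ := by
  refine (mul_self_le_mul_self_iff (norm_nonneg _) (norm_nonneg x)).2 ?_
  rw [← CStarRing.norm_star_mul_self, R.t_mul, ← sq, E.ip_norm]
  exact NonUnitalStarAlgHom.norm_apply_le R.πHom _

def tCLM : E.X →L[ℂ] D :=
  LinearMap.mkContinuous ⟨⟨R.t, R.t_add⟩, R.t_smul⟩ 1 (by simpa using R.t_norm_le)

theorem t_sm (x : E.X) (b : A) : R.t (E.sm x b) = R.t x * R.π b := by
  have hip : E.ip x (E.sm x b) = E.ip x x * b := E.ip_sm x x b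
  have hip' : E.ip (E.sm x b) x = star b * E.ip x x := by
    rw [← E.ip_star, hip, star_mul, E.ip_star]
  refine CStarRing.eq_of_star_mul_eq (c := R.π (star b * E.ip x x * b)) ?_ ?_ ?_ ?_
  · rw [R.t_mul, E.ip_sm, hip']
  · rw [← mul_assoc, R.t_mul, ← R.π_mul, hip']
  · rw [star_mul, ← R.π_star, mul_assoc, R.t_mul, ← R.π_mul, hip, mul_assoc]
  · rw [star_mul, ← R.π_star, mul_assoc, ← mul_assoc (star (R.t x)), R.t_mul, ← R.π_mul,
      ← R.π_mul, mul_assoc]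

end CorrRep

theorem c_cov_rep_of_subcorrespondence_general
    (A B : Type u) [NonUnitalCStarAlgebra A] [NonUnitalCStarAlgebra B]
    (E : Corr A A) (F : Corr B B)
    (sc : SubCorr E F)
    -- B as a regular A–B correspondence via ϕ, and the morphism [B, U_B] : X → Y
    (Bc : Corr A B) (pc : PullCorr sc.ϕ Bc)
    (TXB : Corr A B) (td1 : TensorData E Bc TXB)
    (TBY : Corr A B) (td2 : TensorData Bc F TBY)
    (U : CorrIso TXB TBY)
    (jm : TBY.X → F.X)
    (jm_add : ∀ ζ η, jm (ζ + η) = jm ζ + jm η)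
    (jm_smul : ∀ (c : ℂ) ζ, jm (c • ζ) = c • jm ζ)
    (jm_cont : Continuous jm)
    (jm_mk : ∀ (b : B) (y : F.X), jm (td2.mk2 (pc.u b) y) = F.la b y)
    (hU : ∀ (x : E.X) (b : B), jm (U.toFun (td1.mk2 x (pc.u b))) = F.sm (sc.φd x) b)
    -- the Cuntz–Pimsner algebra O_Y, and W = B ⊗_B O_Y
    (CPY : CuntzPimsner F)
    (OYc : Corr B CPY.O) (pcY : PullCorr CPY.rep.π OYc)
    (W : Corr A CPY.O) (tdW : TensorData Bc OYc W)
    -- the canonical map Λ : (B ⊗_B Y) × O_Y → W, (b ⊗ y, S) ↦ b ⊗ t_Y(y)S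
    (Λ : TBY.X → CPY.O → W.X)
    (Λ_add : ∀ (S : CPY.O) ζ η, Λ (ζ + η) S = Λ ζ S + Λ η S)
    (Λ_smul : ∀ (S : CPY.O) (c : ℂ) ζ, Λ (c • ζ) S = c • Λ ζ S)
    (Λ_cont : ∀ S : CPY.O, Continuous fun ζ => Λ ζ S)
    (Λ_mk : ∀ (b : B) (y : F.X) (S : CPY.O),
      Λ (td2.mk2 (pc.u b) y) S = tdW.mk2 (pc.u b) (pcY.u (CPY.rep.t y * S)))
    -- the C-covariant representation (π, Φ) with π = φ_B(·) ⊗ 1 = W.lmul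
    (Φ : E.X → (W.X →L[ℂ] W.X))
    (Φ_mk : ∀ (x : E.X) (b : B) (S : CPY.O),
      Φ x (tdW.mk2 (pc.u b) (pcY.u S)) = Λ (U.toFun (td1.mk2 x (pc.u b))) S)
    (Φs : E.X → (W.X →L[ℂ] W.X))
    (Φs_adj : ∀ x : E.X, W.IsAdjointPair (Φ x) (Φs x))
    -- the natural isomorphism K(B ⊗_B O_Y) ≅ O_Y, implemented by conjugation with μ
    (μ : W.X → CPY.O)
    (μ_bij : Function.Bijective μ)
    (μ_add : ∀ ζ η, μ (ζ + η) = μ ζ + μ η)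
    (μ_smul : ∀ (c : ℂ) ζ, μ (c • ζ) = c • μ ζ)
    (μ_cont : Continuous μ)
    (μ_mk : ∀ (b : B) (S : CPY.O), μ (tdW.mk2 (pc.u b) (pcY.u S)) = CPY.rep.π b * S) :
    -- ι(Φ(x)) = t_Y(φ̇(x)) and ι(π(a)) = Υ_Y(ϕ(a))
    (∀ (x : E.X) (ζ : W.X), μ (Φ x ζ) = CPY.rep.t (sc.φd x) * μ ζ) ∧
    (∀ (a : A) (ζ : W.X), μ (W.lmul a ζ) = CPY.rep.π (sc.ϕ a) * μ ζ) ∧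
    -- ι carries C*(π, Φ) onto the subalgebra generated by t_Y(φ̇(X)) and Υ_Y(ϕ(A))
    ({S : CPY.O | ∃ T ∈ closure ((NonUnitalAlgebra.adjoin ℂ
        (Set.range W.lmul ∪ Set.range Φ ∪ Set.range Φs) : NonUnitalSubalgebra ℂ _) :
          Set (W.X →L[ℂ] W.X)), ∀ ζ : W.X, S * μ ζ = μ (T ζ)}
      = closure ((NonUnitalStarAlgebra.adjoin ℂ
          (Set.range (fun x : E.X => CPY.rep.t (sc.φd x)) ∪
           Set.range (fun a : A => CPY.rep.π (sc.ϕ a))) :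
            NonUnitalStarSubalgebra ℂ CPY.O) : Set CPY.O)) := by
  let μL : W.X →L[ℂ] CPY.O := ⟨⟨⟨μ, μ_add⟩, μ_smul⟩, μ_cont⟩
  let jmL : TBY.X →L[ℂ] F.X := ⟨⟨⟨jm, jm_add⟩, jm_smul⟩, jm_cont⟩
  have hΛ (S : CPY.O) (ζ : TBY.X) : μ (Λ ζ S) = CPY.rep.t (jm ζ) * S := by
    let ΛS : TBY.X →L[ℂ] W.X := ⟨⟨⟨(Λ · S), Λ_add S⟩, Λ_smul S⟩, Λ_cont S⟩
    refine DFunLike.congr_fun (td2.ext_clm (f := μL ∘L ΛS)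
      (g := (ContinuousLinearMap.mul ℂ _).flip S ∘L CPY.rep.tCLM ∘L jmL)
      (pc.bij.surjective.forall.2 fun b y => ?_)) ζ
    simp [μL, ΛS, jmL, CorrRep.tCLM, Λ_mk, μ_mk, jm_mk, ← CPY.rep.mul_t, mul_assoc]
  have hΦ (x : E.X) (ζ : W.X) : μ (Φ x ζ) = CPY.rep.t (sc.φd x) * μ ζ :=
    DFunLike.congr_fun (tdW.ext_pull pc pcY (f := μL ∘L Φ x)
      (g := .mul ℂ _ (CPY.rep.t (sc.φd x)) ∘L μL) fun b S => by
        simp [μL, Φ_mk, hΛ, hU, μ_mk, CPY.rep.t_sm, mul_assoc]) ζ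
  have hπ (a : A) (ζ : W.X) : μ (W.lmul a ζ) = CPY.rep.π (sc.ϕ a) * μ ζ :=
    DFunLike.congr_fun (tdW.ext_pull pc pcY (f := μL ∘L W.lmul a)
      (g := .mul ℂ _ (CPY.rep.π (sc.ϕ a)) ∘L μL) fun b S => by
        simp [μL, Corr.lmul, tdW.la_mk, pc.la, μ_mk, CPY.rep.π_mul, mul_assoc]) ζ
  refine ⟨hΦ, hπ, ?_⟩
  have hip := tdW.ip_eq_star_mul pc CPY.rep.πHom pcY μL μ_mk
  let e := W.linearIsometryEquivOfIp μL μ_bij hip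
  exact W.setOf_mul_eq_closure_adjoin e hip _ (fun a => by rw [sc.ϕ_star, CPY.rep.π_star]) _
    W.lmul Φ Φs (fun a => e.conjMul_eq_iff.2 fun ζ => (hπ a ζ).symm)
    (fun x => e.conjMul_eq_iff.2 fun ζ => (hΦ x ζ).symm) Φs_adj

/-- Let `X`, `Y` be injective with `X` a nondegenerate subcorrespondence of
`Y` via `(φ̇, ϕ)`, let `(π, Φ)` be the C-covariant representation of `X` on `K(B ⊗_B O_Y)`
associated with the morphism `[B, U_B] : X → Y`, and let `ι : K(B ⊗_B O_Y) → O_Y` be the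
natural isomorphism obtained by conjugating with `μ : b ⊗ S ↦ Υ_Y(b)S`.  Then
`ι(Φ(x)) = t_Y(φ̇(x))` and `ι(π(a)) = Υ_Y(ϕ(a))`; consequently `C*(π, Φ)` is carried onto
the C*-subalgebra of `O_Y` generated by `t_Y(φ̇(X))` and `Υ_Y(ϕ(A))`. -/
theorem c_cov_rep_of_subcorrespondence
    (A B : Type u) [NonUnitalCStarAlgebra A] [NonUnitalCStarAlgebra B]
    (E : Corr A A) (F : Corr B B)
    (hE : E.Injective) (hF : F.Injective)
    (sc : SubCorr E F)
    -- B as a regular A–B correspondence via ϕ, and the morphism [B, U_B] : X → Y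
    (Bc : Corr A B) (pc : PullCorr sc.ϕ Bc)
    (TXB : Corr A B) (td1 : TensorData E Bc TXB)
    (TBY : Corr A B) (td2 : TensorData Bc F TBY)
    (U : CorrIso TXB TBY)
    (jm : TBY.X → F.X)
    (jm_add : ∀ ζ η, jm (ζ + η) = jm ζ + jm η)
    (jm_smul : ∀ (c : ℂ) ζ, jm (c • ζ) = c • jm ζ)
    (jm_cont : Continuous jm) (jm_inj : Function.Injective jm)
    (jm_mk : ∀ (b : B) (y : F.X), jm (td2.mk2 (pc.u b) y) = F.la b y)
    (hU : ∀ (x : E.X) (b : B), jm (U.toFun (td1.mk2 x (pc.u b))) = F.sm (sc.φd x) b)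
    -- the Cuntz–Pimsner algebra O_Y, and W = B ⊗_B O_Y
    (CPY : CuntzPimsner F)
    (OYc : Corr B CPY.O) (pcY : PullCorr CPY.rep.π OYc)
    (W : Corr A CPY.O) (tdW : TensorData Bc OYc W)
    -- the canonical map Λ : (B ⊗_B Y) × O_Y → W, (b ⊗ y, S) ↦ b ⊗ t_Y(y)S
    (Λ : TBY.X → CPY.O → W.X)
    (Λ_add : ∀ (S : CPY.O) ζ η, Λ (ζ + η) S = Λ ζ S + Λ η S)
    (Λ_smul : ∀ (S : CPY.O) (c : ℂ) ζ, Λ (c • ζ) S = c • Λ ζ S)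
    (Λ_cont : ∀ S : CPY.O, Continuous fun ζ => Λ ζ S)
    (Λ_mk : ∀ (b : B) (y : F.X) (S : CPY.O),
      Λ (td2.mk2 (pc.u b) y) S = tdW.mk2 (pc.u b) (pcY.u (CPY.rep.t y * S)))
    -- the C-covariant representation (π, Φ) with π = φ_B(·) ⊗ 1 = W.lmul
    (Φ : E.X → (W.X →L[ℂ] W.X))
    (Φ_mk : ∀ (x : E.X) (b : B) (S : CPY.O),
      Φ x (tdW.mk2 (pc.u b) (pcY.u S)) = Λ (U.toFun (td1.mk2 x (pc.u b))) S)
    (Φs : E.X → (W.X →L[ℂ] W.X))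
    (Φs_adj : ∀ x : E.X, W.IsAdjointPair (Φ x) (Φs x))
    -- the natural isomorphism K(B ⊗_B O_Y) ≅ O_Y, implemented by conjugation with μ
    (μ : W.X → CPY.O)
    (μ_bij : Function.Bijective μ)
    (μ_add : ∀ ζ η, μ (ζ + η) = μ ζ + μ η)
    (μ_smul : ∀ (c : ℂ) ζ, μ (c • ζ) = c • μ ζ)
    (μ_cont : Continuous μ)
    (μ_mk : ∀ (b : B) (S : CPY.O), μ (tdW.mk2 (pc.u b) (pcY.u S)) = CPY.rep.π b * S) :
    -- ι(Φ(x)) = t_Y(φ̇(x)) and ι(π(a)) = Υ_Y(ϕ(a))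
    (∀ (x : E.X) (ζ : W.X), μ (Φ x ζ) = CPY.rep.t (sc.φd x) * μ ζ) ∧
    (∀ (a : A) (ζ : W.X), μ (W.lmul a ζ) = CPY.rep.π (sc.ϕ a) * μ ζ) ∧
    -- ι carries C*(π, Φ) onto the subalgebra generated by t_Y(φ̇(X)) and Υ_Y(ϕ(A))
    ({S : CPY.O | ∃ T ∈ closure ((NonUnitalAlgebra.adjoin ℂ
        (Set.range W.lmul ∪ Set.range Φ ∪ Set.range Φs) : NonUnitalSubalgebra ℂ _) :
          Set (W.X →L[ℂ] W.X)), ∀ ζ : W.X, S * μ ζ = μ (T ζ)}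
      = closure ((NonUnitalStarAlgebra.adjoin ℂ
          (Set.range (fun x : E.X => CPY.rep.t (sc.φd x)) ∪
           Set.range (fun a : A => CPY.rep.π (sc.ϕ a))) :
            NonUnitalStarSubalgebra ℂ CPY.O) : Set CPY.O)) :=
  c_cov_rep_of_subcorrespondence_general A B E F sc Bc pc TXB td1 TBY td2 U jm jm_add jm_smul
    jm_cont jm_mk hU CPY OYc pcY W tdW Λ Λ_add Λ_smul Λ_cont Λ_mk Φ Φ_mk Φs Φs_adj μ μ_bij μ_add
    μ_smul μ_cont μ_mk

end
end
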